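/- arXiv:1504.06728 — 6 statements merged into one kernel-verified Lean document; each statement's English description precedes it below -/
import Mathlib

section
/- Smoothness and uniform bounds for the stable-leaf functions ζ (Proposition 4.13): Let τ ∈ C^∞(φ(I); ℝ). For each admissible right-infinite word w_+ = (w_0,w_1,…) ∈ W_+ and each x ∈ I_{w_0}, the series ζ_{w_+}(x) := −∑_{k≥1} (φ_{w_{0,k}})'(x) · τ'(φ_{w_{0,k}}(x)) converges, together with all x-derivatives, uniformly on I_{w_0}; it defines a C^∞ function ζ_{w_+} on I_{w_0}, and for every α ∈ ℕ there exists C_α > 0, independent of w_+ ∈ W_+, such that |∂_x^α ζ_{w_+}(x)| ≤ C_α for all x ∈ I_{w_0}. -/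
/-!
The series for `ζ_{w₊}` is differentiated termwise. Write `Φ_k = φ_{w_{0,k}}`; the chain rule gives
`Φ_{k+1}' = (φ_{w_k,w_{k+1}}' ∘ Φ_k) · Φ_k'`. By compactness the intervals have open
neighbourhoods `V_i ⊇ I_i` that the maps still send into `I`, with `|φ'| ≤ θ₁ < 1` there. On `V`, Leibniz' rule bounds the
`α`-th derivative of `Φ_{k+1}'` by `θ₁` times that of `Φ_k'`, plus terms that are controlled
(through Faà di Bruno's formula) by derivatives of `Φ_k'` of lower order; by induction on `α` all
of them are `O(θ₂ ^ k)` for any `θ₂ ∈ (θ₁, 1)`, uniformly in the word. So every derivative of the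
`k`-th term of the series is `O(θ₂ ^ k)` and the Weierstrass M-test applies.
-/

open Set Filter

/-- Forward composition `φ_{w_{0,k}} = φ_{w_{k−1},w_k} ∘ ⋯ ∘ φ_{w_0,w_1}` along a
right-infinite word. -/
def compFwd {N : ℕ} (φm : Fin N → Fin N → ℝ → ℝ) (w : ℕ → Fin N) : ℕ → ℝ → ℝ
  | 0 => id
  | k + 1 => φm (w k) (w (k + 1)) ∘ compFwd φm w k

open scoped ContDiff Nat

theorem le_mul_pow_of_le_mul_add_mul_pow {a : ℕ → ℝ} {θ₁ θ₂ E : ℝ} (hθ₁ : 0 ≤ θ₁)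
    (hθ : θ₁ < θ₂) (h0 : a 0 ≤ 1) (hstep : ∀ k, a (k + 1) ≤ θ₁ * a k + E * θ₂ ^ k) (k : ℕ) :
    a k ≤ max 1 (E / (θ₂ - θ₁)) * θ₂ ^ k := by
  set C := max 1 (E / (θ₂ - θ₁))
  have hE : E ≤ C * (θ₂ - θ₁) := (div_le_iff₀ (sub_pos.2 hθ)).1 (le_max_right _ _)
  induction k with
  | zero => rw [pow_zero, mul_one]; exact h0.trans (le_max_left _ _)
  | succ k ih =>
    have hpow : 0 ≤ θ₂ ^ k := pow_nonneg (hθ₁.trans hθ.le) k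
    calc a (k + 1) ≤ θ₁ * a k + E * θ₂ ^ k := hstep k
      _ ≤ θ₁ * (C * θ₂ ^ k) + C * (θ₂ - θ₁) * θ₂ ^ k := by gcongr
      _ = C * θ₂ ^ (k + 1) := by ring

theorem norm_iteratedDeriv_mul_le_of_le {𝕜 A : Type*} [NontriviallyNormedField 𝕜] [NormedRing A]
    [NormedAlgebra 𝕜 A] {f g : 𝕜 → A} (hf : ContDiff 𝕜 ∞ f) (hg : ContDiff 𝕜 ∞ g) {x : 𝕜}
    {P Q : ℝ} {n : ℕ} (hP : 0 ≤ P) (hQ : 0 ≤ Q)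
    (hfP : ∀ i, 1 ≤ i → i ≤ n → ‖iteratedDeriv i f x‖ ≤ P)
    (hgQ : ∀ i < n, ‖iteratedDeriv i g x‖ ≤ Q) :
    ‖iteratedDeriv n (fun y => f y * g y) x‖ ≤ ‖f x‖ * ‖iteratedDeriv n g x‖ + 2 ^ n * P * Q := by
  simp only [← norm_iteratedFDeriv_eq_norm_iteratedDeriv] at hfP hgQ ⊢
  refine (norm_iteratedFDeriv_mul_le hf hg x (mod_cast le_top)).trans ?_
  rw [Finset.sum_range_succ', add_comm]
  have hchoose : ∑ i ∈ Finset.range n, (n.choose (i + 1) : ℝ) ≤ 2 ^ n := by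
    have := Nat.sum_range_choose n
    rw [Finset.sum_range_succ'] at this
    exact_mod_cast this ▸ Nat.le_add_right _ _
  gcongr ?_ + ?_
  · simp
  · calc ∑ i ∈ Finset.range n, (n.choose (i + 1) : ℝ) * ‖iteratedFDeriv 𝕜 (i + 1) f x‖ *
          ‖iteratedFDeriv 𝕜 (n - (i + 1)) g x‖
        ≤ ∑ i ∈ Finset.range n, (n.choose (i + 1) : ℝ) * P * Q := by
          gcongr with i hi
          · exact hfP _ (by omega) (by simp at hi; omega)
          · exact hgQ _ (by simp at hi; omega)
      _ ≤ 2 ^ n * P * Q := by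
          rw [← Finset.sum_mul, ← Finset.sum_mul]; gcongr

theorem norm_iteratedDeriv_comp_le_of_le {𝕜 F : Type*} [NontriviallyNormedField 𝕜]
    [NormedAddCommGroup F] [NormedSpace 𝕜 F] {g : 𝕜 → F} {f : 𝕜 → 𝕜} (hg : ContDiff 𝕜 ∞ g)
    (hf : ContDiff 𝕜 ∞ f) {x : 𝕜} {B C : ℝ} {n : ℕ}
    (hB : ∀ i ≤ n, ‖iteratedDeriv i g (f x)‖ ≤ B)
    (hC : ∀ i < n, ‖iteratedDeriv i (deriv f) x‖ ≤ C) {i : ℕ} (hi : i ≤ n) :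
    ‖iteratedDeriv i (g ∘ f) x‖ ≤ n ! * B * max 1 C ^ n := by
  have hB0 : 0 ≤ B := (norm_nonneg _).trans (hB 0 (Nat.zero_le n))
  have hD : ∀ m, 1 ≤ m → m ≤ i → ‖iteratedFDeriv 𝕜 m f x‖ ≤ max 1 C ^ m := by
    intro m hm1 hmi
    obtain ⟨m, rfl⟩ := Nat.exists_eq_add_of_le' hm1
    rw [norm_iteratedFDeriv_eq_norm_iteratedDeriv, iteratedDeriv_succ']
    exact ((hC m (by omega)).trans (le_max_right _ _)).trans
      (le_self_pow₀ (le_max_left _ _) (Nat.succ_ne_zero m))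
  rw [← norm_iteratedFDeriv_eq_norm_iteratedDeriv]
  refine (norm_iteratedFDeriv_comp_le hg hf (mod_cast le_top) x
    (fun m hm => by simpa [norm_iteratedFDeriv_eq_norm_iteratedDeriv] using hB m (hm.trans hi))
    hD).trans ?_
  gcongr
  exact le_max_left _ _

theorem IsCompact.exists_forall_norm_iteratedDeriv_le {𝕜 F ι : Type*}
    [NontriviallyNormedField 𝕜] [ProperSpace 𝕜] [NormedAddCommGroup F] [NormedSpace 𝕜 F]
    [Finite ι] {K : Set 𝕜} (hK : IsCompact K) {f : ι → 𝕜 → F} (hf : ∀ i, ContDiff 𝕜 ∞ (f i))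
    (n : ℕ) : ∃ B, ∀ i, ∀ x ∈ K, ∀ m ≤ n, ‖iteratedDeriv m (f i) x‖ ≤ B := by
  have hbound (p : ι × Fin (n + 1)) : ∃ B, ∀ x ∈ K, ‖iteratedDeriv p.2 (f p.1) x‖ ≤ B :=
    hK.exists_bound_of_continuousOn
      ((hf p.1).continuous_iteratedDeriv _ (mod_cast le_top)).continuousOn
  choose B hB using hbound
  obtain ⟨M, hM⟩ := Finite.exists_le B
  exact ⟨M, fun i x hx m hm => (hB (i, ⟨m, by omega⟩) x hx).trans (hM _)⟩

section SmoothSeries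

variable {𝕜 F ι : Type*} [NontriviallyNormedField 𝕜] [IsRCLikeNormedField 𝕜]
  [NormedAddCommGroup F] [NormedSpace 𝕜 F] [CompleteSpace F] {U s : Set 𝕜}

theorem hasDerivAt_tsum_iteratedDeriv {f : ι → 𝕜 → F} {u : ℕ → ι → ℝ} (hU : IsOpen U)
    (hU' : IsPreconnected U) (hf : ∀ k, ContDiff 𝕜 ∞ (f k)) (hu : ∀ α, Summable (u α))
    (hfu : ∀ α k, ∀ x ∈ U, ‖iteratedDeriv α (f k) x‖ ≤ u α k) (α : ℕ) {x : 𝕜} (hx : x ∈ U) :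
    HasDerivAt (fun y => ∑' k, iteratedDeriv α (f k) y)
      (∑' k, iteratedDeriv (α + 1) (f k) x) x := by
  refine hasDerivAt_tsum_of_isPreconnected (hu (α + 1)) hU hU' (fun k y _ => ?_)
    (fun k y hy => hfu (α + 1) k y hy) hx
    ((hu α).of_norm_bounded fun k => hfu α k x hx) hx
  rw [iteratedDeriv_succ]
  exact ((hf k).differentiable_iteratedDeriv α
    (by exact_mod_cast ENat.natCast_lt_top α)).differentiableAt.hasDerivAt

theorem iteratedDeriv_tsum_of_isOpen {f : ι → 𝕜 → F} {u : ℕ → ι → ℝ} (hU : IsOpen U)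
    (hU' : IsPreconnected U) (hf : ∀ k, ContDiff 𝕜 ∞ (f k)) (hu : ∀ α, Summable (u α))
    (hfu : ∀ α k, ∀ x ∈ U, ‖iteratedDeriv α (f k) x‖ ≤ u α k) (α : ℕ) :
    EqOn (iteratedDeriv α fun y => ∑' k, f k y) (fun y => ∑' k, iteratedDeriv α (f k) y) U := by
  induction α with
  | zero => intro x _; simp
  | succ α ih =>
    intro x hx
    rw [iteratedDeriv_succ, (eventuallyEq_of_mem (hU.mem_nhds hx) ih).deriv_eq]
    exact (hasDerivAt_tsum_iteratedDeriv hU hU' hf hu hfu α hx).deriv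

theorem contDiffOn_tsum_of_isOpen {f : ι → 𝕜 → F} {u : ℕ → ι → ℝ} (hU : IsOpen U)
    (hU' : IsPreconnected U) (hf : ∀ k, ContDiff 𝕜 ∞ (f k)) (hu : ∀ α, Summable (u α))
    (hfu : ∀ α k, ∀ x ∈ U, ‖iteratedDeriv α (f k) x‖ ≤ u α k) :
    ContDiffOn 𝕜 ∞ (fun y => ∑' k, f k y) U := by
  refine contDiffOn_of_differentiableOn_deriv fun α _ x hx => ?_
  have hG := (hasDerivAt_tsum_iteratedDeriv hU hU' hf hu hfu α hx).differentiableAt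
  refine (hG.differentiableWithinAt (s := U)).congr (fun y hy => ?_) ?_
  · rw [iteratedDerivWithin_of_isOpen hU hy, iteratedDeriv_tsum_of_isOpen hU hU' hf hu hfu α hy]
  · rw [iteratedDerivWithin_of_isOpen hU hx, iteratedDeriv_tsum_of_isOpen hU hU' hf hu hfu α hx]

theorem iteratedDerivWithin_tsum_of_subset {f : ι → 𝕜 → F} {u : ℕ → ι → ℝ} (hU : IsOpen U)
    (hU' : IsPreconnected U) (hs : UniqueDiffOn 𝕜 s) (hsU : s ⊆ U)
    (hf : ∀ k, ContDiff 𝕜 ∞ (f k)) (hu : ∀ α, Summable (u α))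
    (hfu : ∀ α k, ∀ x ∈ U, ‖iteratedDeriv α (f k) x‖ ≤ u α k) (α : ℕ) {x : 𝕜} (hx : x ∈ s) :
    iteratedDerivWithin α (fun y => ∑' k, f k y) s x = ∑' k, iteratedDeriv α (f k) x := by
  have hsmooth := (contDiffOn_tsum_of_isOpen hU hU' hf hu hfu).contDiffAt (hU.mem_nhds (hsU hx))
  rw [iteratedDerivWithin_eq_iteratedDeriv hs (hsmooth.of_le (mod_cast le_top)) hx,
    iteratedDeriv_tsum_of_isOpen hU hU' hf hu hfu α (hsU hx)]

theorem tendstoUniformlyOn_iteratedDerivWithin_sum_range {f : ℕ → 𝕜 → F} {u : ℕ → ℕ → ℝ}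
    (hU : IsOpen U) (hU' : IsPreconnected U) (hs : UniqueDiffOn 𝕜 s) (hsU : s ⊆ U)
    (hf : ∀ k, ContDiff 𝕜 ∞ (f k)) (hu : ∀ α, Summable (u α))
    (hfu : ∀ α k, ∀ x ∈ U, ‖iteratedDeriv α (f k) x‖ ≤ u α k) (α : ℕ) :
    TendstoUniformlyOn (fun n => iteratedDerivWithin α (fun y => ∑ k ∈ Finset.range n, f k y) s)
      (iteratedDerivWithin α (fun y => ∑' k, f k y) s) atTop s := by
  have hf' (k : ℕ) (x : 𝕜) : ContDiffAt 𝕜 α (f k) x := (hf k).contDiffAt.of_le (mod_cast le_top)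
  refine ((tendstoUniformlyOn_tsum_nat (hu α) fun k x hx => hfu α k x (hsU hx)).congr
    (Eventually.of_forall fun n x hx => ?_)).congr_right fun x hx =>
      (iteratedDerivWithin_tsum_of_subset hU hU' hs hsU hf hu hfu α hx).symm
  rw [iteratedDerivWithin_eq_iteratedDeriv hs (ContDiffAt.sum fun k _ => hf' k x) hx,
    iteratedDeriv_fun_sum fun k _ => hf' k x]

theorem norm_iteratedDerivWithin_tsum_le {f : ι → 𝕜 → F} {u : ℕ → ι → ℝ} (hU : IsOpen U)
    (hU' : IsPreconnected U) (hs : UniqueDiffOn 𝕜 s) (hsU : s ⊆ U)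
    (hf : ∀ k, ContDiff 𝕜 ∞ (f k)) (hu : ∀ α, Summable (u α))
    (hfu : ∀ α k, ∀ x ∈ U, ‖iteratedDeriv α (f k) x‖ ≤ u α k) (α : ℕ) {x : 𝕜} (hx : x ∈ s) :
    ‖iteratedDerivWithin α (fun y => ∑' k, f k y) s x‖ ≤ ∑' k, u α k := by
  rw [iteratedDerivWithin_tsum_of_subset hU hU' hs hsU hf hu hfu α hx]
  exact tsum_of_norm_bounded (hu α).hasSum fun k => hfu α k x (hsU hx)

end SmoothSeries

section CompFwd

variable {N : ℕ} {adj : Fin N → Fin N → Prop} {φm : Fin N → Fin N → ℝ → ℝ} {w : ℕ → Fin N}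
  {V : Fin N → Set ℝ}

theorem contDiff_compFwd (hφ : ∀ i j, adj i j → ContDiff ℝ ∞ (φm i j))
    (hw : ∀ n, adj (w n) (w (n + 1))) (k : ℕ) : ContDiff ℝ ∞ (compFwd φm w k) := by
  induction k with
  | zero => exact contDiff_id
  | succ k ih => exact (hφ _ _ (hw k)).comp ih

theorem compFwd_mem (hmaps : ∀ i j, adj i j → MapsTo (φm i j) (V i) (V j))
    (hw : ∀ n, adj (w n) (w (n + 1))) {x : ℝ} (hx : x ∈ V (w 0)) (k : ℕ) :
    compFwd φm w k x ∈ V (w k) := by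
  induction k with
  | zero => exact hx
  | succ k ih => exact hmaps _ _ (hw k) ih

theorem deriv_compFwd_zero : deriv (compFwd φm w 0) = fun _ => 1 :=
  deriv_id'

theorem deriv_compFwd_succ (hφ : ∀ i j, adj i j → ContDiff ℝ ∞ (φm i j))
    (hw : ∀ n, adj (w n) (w (n + 1))) (k : ℕ) :
    deriv (compFwd φm w (k + 1)) =
      fun x => (deriv (φm (w k) (w (k + 1))) ∘ compFwd φm w k) x * deriv (compFwd φm w k) x := by
  funext x
  exact deriv_comp x ((hφ _ _ (hw k)).differentiable (by simp)).differentiableAt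
    ((contDiff_compFwd hφ hw k).differentiable (by simp)).differentiableAt

theorem norm_iteratedDeriv_deriv_compFwd_zero_le (α : ℕ) (x : ℝ) :
    ‖iteratedDeriv α (deriv (compFwd φm w 0)) x‖ ≤ 1 := by
  rw [deriv_compFwd_zero, iteratedDeriv_const]
  split_ifs <;> simp

theorem norm_iteratedDeriv_deriv_compFwd_le {θ₁ θ₂ B C : ℝ} {α : ℕ}
    (hφ : ∀ i j, adj i j → ContDiff ℝ ∞ (φm i j))
    (hmaps : ∀ i j, adj i j → MapsTo (φm i j) (V i) (V j))
    (hderiv : ∀ i j, adj i j → ∀ x ∈ V i, |deriv (φm i j) x| ≤ θ₁)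
    (hB : ∀ i j, adj i j → ∀ x ∈ V i, ∀ m ≤ α, ‖iteratedDeriv m (deriv (φm i j)) x‖ ≤ B)
    (hθ₁ : 0 ≤ θ₁) (hθ : θ₁ < θ₂) (hθ₂ : θ₂ ≤ 1) (hw : ∀ n, adj (w n) (w (n + 1)))
    (hC0 : 0 ≤ C)
    (hC : ∀ i < α, ∀ k, ∀ x ∈ V (w 0),
      ‖iteratedDeriv i (deriv (compFwd φm w k)) x‖ ≤ C * θ₂ ^ k)
    {x : ℝ} (hx : x ∈ V (w 0)) (k : ℕ) :
    ‖iteratedDeriv α (deriv (compFwd φm w k)) x‖ ≤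
      max 1 (2 ^ α * (α ! * B * max 1 C ^ α) * C / (θ₂ - θ₁)) * θ₂ ^ k := by
  set A := α ! * B * max 1 C ^ α
  have hθ₂0 : 0 ≤ θ₂ := hθ₁.trans hθ.le
  have hfactor : ∀ k, ∀ i ≤ α,
      ‖iteratedDeriv i (deriv (φm (w k) (w (k + 1))) ∘ compFwd φm w k) x‖ ≤ A := fun k i hi =>
    norm_iteratedDeriv_comp_le_of_le (contDiff_infty_iff_deriv.1 (hφ _ _ (hw k))).2
      (contDiff_compFwd hφ hw k) (fun m hm => hB _ _ (hw k) _ (compFwd_mem hmaps hw hx k) m hm)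
      (fun m hm => (hC m hm k x hx).trans (mul_le_of_le_one_right hC0 (pow_le_one₀ hθ₂0 hθ₂))) hi
  have hA : 0 ≤ A := (norm_nonneg _).trans (hfactor 0 0 (Nat.zero_le α))
  refine le_mul_pow_of_le_mul_add_mul_pow
    (a := fun k => ‖iteratedDeriv α (deriv (compFwd φm w k)) x‖) hθ₁ hθ (norm_iteratedDeriv_deriv_compFwd_zero_le α x) (fun k => ?_) k
  have hfactor0 : ‖(deriv (φm (w k) (w (k + 1))) ∘ compFwd φm w k) x‖ ≤ θ₁ :=
    hderiv _ _ (hw k) _ (compFwd_mem hmaps hw hx k)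
  rw [deriv_compFwd_succ hφ hw k]
  calc _ ≤ ‖(deriv (φm (w k) (w (k + 1))) ∘ compFwd φm w k) x‖ *
          ‖iteratedDeriv α (deriv (compFwd φm w k)) x‖ + 2 ^ α * A * (C * θ₂ ^ k) :=
        norm_iteratedDeriv_mul_le_of_le
          ((contDiff_infty_iff_deriv.1 (hφ _ _ (hw k))).2.comp (contDiff_compFwd hφ hw k))
          (contDiff_infty_iff_deriv.1 (contDiff_compFwd hφ hw k)).2 hA (by positivity)
          (fun i _ hi => hfactor k i hi) (fun i hi => hC i hi k x hx)
    _ ≤ θ₁ * ‖iteratedDeriv α (deriv (compFwd φm w k)) x‖ + 2 ^ α * A * C * θ₂ ^ k := by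
        rw [mul_assoc (2 ^ α * A)]; gcongr

theorem exists_norm_iteratedDeriv_deriv_compFwd_le {θ₁ θ₂ : ℝ}
    (hφ : ∀ i j, adj i j → ContDiff ℝ ∞ (φm i j))
    (hmaps : ∀ i j, adj i j → MapsTo (φm i j) (V i) (V j))
    (hderiv : ∀ i j, adj i j → ∀ x ∈ V i, |deriv (φm i j) x| ≤ θ₁)
    (hB : ∀ α, ∃ B, ∀ i j, adj i j → ∀ x ∈ V i, ∀ m ≤ α,
      ‖iteratedDeriv m (deriv (φm i j)) x‖ ≤ B)
    (hθ₁ : 0 ≤ θ₁) (hθ : θ₁ < θ₂) (hθ₂ : θ₂ ≤ 1) (α : ℕ) :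
    ∃ C, 0 ≤ C ∧ ∀ w : ℕ → Fin N, (∀ n, adj (w n) (w (n + 1))) → ∀ i < α, ∀ k, ∀ x ∈ V (w 0),
      ‖iteratedDeriv i (deriv (compFwd φm w k)) x‖ ≤ C * θ₂ ^ k := by
  induction α with
  | zero => exact ⟨0, le_rfl, fun _ _ i hi => absurd hi (Nat.not_lt_zero i)⟩
  | succ α ih =>
    obtain ⟨C, hC0, hC⟩ := ih
    obtain ⟨B, hB⟩ := hB α
    set C' := max 1 (2 ^ α * (α ! * B * max 1 C ^ α) * C / (θ₂ - θ₁))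
    have hpow : ∀ k, 0 ≤ θ₂ ^ k := fun k => pow_nonneg (hθ₁.trans hθ.le) k
    refine ⟨max C C', hC0.trans (le_max_left _ _), fun w hw i hi k x hx => ?_⟩
    rcases Nat.lt_succ_iff_lt_or_eq.1 hi with hi | rfl
    · exact (hC w hw i hi k x hx).trans
        (mul_le_mul_of_nonneg_right (le_max_left _ _) (hpow k))
    · exact (norm_iteratedDeriv_deriv_compFwd_le hφ hmaps hderiv hB hθ₁ hθ hθ₂ hw hC0
        (hC w hw) hx k).trans (mul_le_mul_of_nonneg_right (le_max_right _ _) (hpow k))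

/-- Indexed from `0`: `zetaTerm φm τ w k` is the paper's term with index `k + 1`. -/
noncomputable def zetaTerm (φm : Fin N → Fin N → ℝ → ℝ) (τ : ℝ → ℝ) (w : ℕ → Fin N) (k : ℕ) :
    ℝ → ℝ :=
  fun y => -(deriv (compFwd φm w (k + 1)) y * deriv τ (compFwd φm w (k + 1) y))

noncomputable def zeta (φm : Fin N → Fin N → ℝ → ℝ) (τ : ℝ → ℝ) (w : ℕ → Fin N) : ℝ → ℝ :=
  fun x => ∑' k, zetaTerm φm τ w k x

variable {τ : ℝ → ℝ}

theorem contDiff_zetaTerm (hφ : ∀ i j, adj i j → ContDiff ℝ ∞ (φm i j))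
    (hτ : ContDiff ℝ ∞ τ) (hw : ∀ n, adj (w n) (w (n + 1))) (k : ℕ) :
    ContDiff ℝ ∞ (zetaTerm φm τ w k) :=
  ((contDiff_infty_iff_deriv.1 (contDiff_compFwd hφ hw (k + 1))).2.mul
    ((contDiff_infty_iff_deriv.1 hτ).2.comp (contDiff_compFwd hφ hw (k + 1)))).neg

theorem norm_iteratedDeriv_zetaTerm_le {θ₂ B C : ℝ} {α : ℕ}
    (hφ : ∀ i j, adj i j → ContDiff ℝ ∞ (φm i j))
    (hmaps : ∀ i j, adj i j → MapsTo (φm i j) (V i) (V j)) (hτ : ContDiff ℝ ∞ τ)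
    (hBτ : ∀ i, ∀ x ∈ V i, ∀ m ≤ α, ‖iteratedDeriv m (deriv τ) x‖ ≤ B)
    (hθ₂0 : 0 ≤ θ₂) (hθ₂ : θ₂ ≤ 1) (hw : ∀ n, adj (w n) (w (n + 1))) (hC0 : 0 ≤ C)
    (hC : ∀ i ≤ α, ∀ k, ∀ x ∈ V (w 0),
      ‖iteratedDeriv i (deriv (compFwd φm w k)) x‖ ≤ C * θ₂ ^ k)
    {x : ℝ} (hx : x ∈ V (w 0)) (k : ℕ) :
    ‖iteratedDeriv α (zetaTerm φm τ w k) x‖ ≤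
      (1 + 2 ^ α) * (C * (α ! * B * max 1 C ^ α)) * θ₂ ^ k := by
  set A := α ! * B * max 1 C ^ α
  set Φ := compFwd φm w (k + 1)
  have hΦ := contDiff_compFwd hφ hw (k + 1)
  have hcomp : ∀ i ≤ α, ‖iteratedDeriv i (deriv τ ∘ Φ) x‖ ≤ A := fun i hi =>
    norm_iteratedDeriv_comp_le_of_le (contDiff_infty_iff_deriv.1 hτ).2 hΦ
      (fun m hm => hBτ _ _ (compFwd_mem hmaps hw hx (k + 1)) m hm)
      (fun m hm => (hC m hm.le (k + 1) x hx).trans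
        (mul_le_of_le_one_right hC0 (pow_le_one₀ hθ₂0 hθ₂))) hi
  have hA : 0 ≤ A := (norm_nonneg _).trans (hcomp 0 (Nat.zero_le α))
  have hP : C * θ₂ ^ (k + 1) ≤ C * θ₂ ^ k :=
    mul_le_mul_of_nonneg_left (pow_le_pow_of_le_one hθ₂0 hθ₂ k.le_succ) hC0
  have hderiv0 : ‖deriv Φ x‖ ≤ C * θ₂ ^ (k + 1) := by
    simpa using hC 0 (Nat.zero_le α) (k + 1) x hx
  rw [show zetaTerm φm τ w k = fun y => -(deriv Φ y * (deriv τ ∘ Φ) y) from rfl,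
    iteratedDeriv_fun_neg, norm_neg]
  calc ‖iteratedDeriv α (fun y => deriv Φ y * (deriv τ ∘ Φ) y) x‖
      ≤ ‖deriv Φ x‖ * ‖iteratedDeriv α (deriv τ ∘ Φ) x‖ + 2 ^ α * (C * θ₂ ^ (k + 1)) * A :=
        norm_iteratedDeriv_mul_le_of_le (contDiff_infty_iff_deriv.1 hΦ).2
          ((contDiff_infty_iff_deriv.1 hτ).2.comp hΦ) (by positivity) hA
          (fun i _ hi => hC i hi (k + 1) x hx) (fun i hi => hcomp i hi.le)
    _ ≤ C * θ₂ ^ k * A + 2 ^ α * (C * θ₂ ^ k) * A := by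
        gcongr
        · exact hderiv0.trans hP
        · exact hcomp α le_rfl
    _ = (1 + 2 ^ α) * (C * A) * θ₂ ^ k := by ring

theorem exists_norm_iteratedDeriv_zetaTerm_le {θ₁ θ₂ : ℝ}
    (hφ : ∀ i j, adj i j → ContDiff ℝ ∞ (φm i j))
    (hmaps : ∀ i j, adj i j → MapsTo (φm i j) (V i) (V j))
    (hderiv : ∀ i j, adj i j → ∀ x ∈ V i, |deriv (φm i j) x| ≤ θ₁)
    (hB : ∀ α, ∃ B, ∀ i j, adj i j → ∀ x ∈ V i, ∀ m ≤ α,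
      ‖iteratedDeriv m (deriv (φm i j)) x‖ ≤ B)
    (hτ : ContDiff ℝ ∞ τ)
    (hBτ : ∀ α, ∃ B, ∀ i, ∀ x ∈ V i, ∀ m ≤ α, ‖iteratedDeriv m (deriv τ) x‖ ≤ B)
    (hθ₁ : 0 ≤ θ₁) (hθ : θ₁ < θ₂) (hθ₂ : θ₂ ≤ 1) (α : ℕ) :
    ∃ T, ∀ w : ℕ → Fin N, (∀ n, adj (w n) (w (n + 1))) → ∀ k, ∀ x ∈ V (w 0),
      ‖iteratedDeriv α (zetaTerm φm τ w k) x‖ ≤ T * θ₂ ^ k := by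
  obtain ⟨C, hC0, hC⟩ :=
    exists_norm_iteratedDeriv_deriv_compFwd_le hφ hmaps hderiv hB hθ₁ hθ hθ₂ (α + 1)
  obtain ⟨B, hBτ⟩ := hBτ α
  exact ⟨_, fun w hw k x hx => norm_iteratedDeriv_zetaTerm_le hφ hmaps hτ hBτ
    (hθ₁.trans hθ.le) hθ₂ hw hC0 (fun i hi => hC w hw i (Nat.lt_succ_of_le hi)) hx k⟩

end CompFwd

theorem exists_adj_of_transitive {ι : Type*} {adj : ι → ι → Prop}
    (htrans : ∃ T : ℕ, 0 < T ∧ ∀ i j, ∃ p : ℕ → ι,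
      p 0 = i ∧ p T = j ∧ ∀ k < T, adj (p k) (p (k + 1))) (j : ι) :
    ∃ i, adj i j := by
  obtain ⟨T, hT, hpath⟩ := htrans
  obtain ⟨p, -, hpT, hp⟩ := hpath j j
  exact ⟨p (T - 1), by simpa [Nat.sub_add_cancel hT, hpT] using hp (T - 1) (by omega)⟩

theorem exists_thickening_forall_deriv_lt_and_mem {ι : Type*} [Finite ι] {adj : ι → ι → Prop}
    {φm : ι → ι → ℝ → ℝ} {I : ι → Set ℝ} {θ₁ : ℝ} (hI : ∀ i, IsCompact (I i))
    (hφ : ∀ i j, adj i j → ContDiff ℝ ∞ (φm i j))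
    (hderiv : ∀ i j, adj i j → ∀ x ∈ I i, |deriv (φm i j) x| < θ₁)
    (hinto : ∀ i j, adj i j → φm i j '' I i ⊆ interior (I j)) (i : ι) :
    ∃ ε > 0, ∀ j, adj i j → ∀ x ∈ Metric.thickening ε (I i),
      |deriv (φm i j) x| < θ₁ ∧ φm i j x ∈ I j := by
  let O : {j // adj i j} → Set ℝ := fun j =>
    {x | |deriv (φm i j) x| < θ₁} ∩ φm i j ⁻¹' interior (I j)
  have hO (j : {j // adj i j}) : IsOpen (O j) :=
    (isOpen_lt (continuous_abs.comp ((hφ i j j.2).continuous_deriv (by simp)))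
      continuous_const).inter (isOpen_interior.preimage (hφ i j j.2).continuous)
  have hIO : I i ⊆ ⋂ j, O j :=
    subset_iInter fun j x hx => ⟨hderiv i j j.2 x hx, hinto i j j.2 ⟨x, hx, rfl⟩⟩
  obtain ⟨ε, hε, hsub⟩ := (hI i).exists_thickening_subset_open (isOpen_iInter_of_finite hO) hIO
  refine ⟨ε, hε, fun j hj x hx => ?_⟩
  have hxO := mem_iInter.1 (hsub hx) ⟨j, hj⟩
  exact ⟨hxO.1, interior_subset hxO.2⟩

theorem exists_nhds_norm_iteratedDeriv_zetaTerm_le {N : ℕ} {I : Fin N → Set ℝ}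
    {adj : Fin N → Fin N → Prop} {φm : Fin N → Fin N → ℝ → ℝ} {τ : ℝ → ℝ} {θ : ℝ}
    (hI : ∀ i, IsCompact (I i)) (hIconv : ∀ i, Convex ℝ (I i)) (hθ0 : 0 < θ) (hθ1 : θ < 1)
    (hφ : ∀ i j, adj i j → ContDiff ℝ ∞ (φm i j))
    (hcontr : ∀ i j, adj i j → ∀ x ∈ I i, 0 < deriv (φm i j) x ∧ deriv (φm i j) x ≤ θ)
    (hinto : ∀ i j, adj i j → φm i j '' I i ⊆ interior (I j)) (hτ : ContDiff ℝ ∞ τ) :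
    ∃ θ₂, 0 ≤ θ₂ ∧ θ₂ < 1 ∧ ∃ V : Fin N → Set ℝ,
      (∀ i, IsOpen (V i) ∧ IsPreconnected (V i) ∧ I i ⊆ V i) ∧
      ∀ α, ∃ T, ∀ w : ℕ → Fin N, (∀ n, adj (w n) (w (n + 1))) → ∀ k, ∀ x ∈ V (w 0),
        ‖iteratedDeriv α (zetaTerm φm τ w k) x‖ ≤ T * θ₂ ^ k := by
  obtain ⟨θ₁, hθθ₁, hθ₁1⟩ := exists_between hθ1
  obtain ⟨θ₂, hθ₁₂, hθ₂1⟩ := exists_between hθ₁1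
  have hθ₁0 : 0 ≤ θ₁ := (hθ0.trans hθθ₁).le
  have hderivI : ∀ i j, adj i j → ∀ x ∈ I i, |deriv (φm i j) x| < θ₁ := fun i j h x hx => by
    rw [abs_of_pos (hcontr i j h x hx).1]
    exact (hcontr i j h x hx).2.trans_lt hθθ₁
  choose ε hε hV using exists_thickening_forall_deriv_lt_and_mem hI hφ hderivI hinto
  set V := fun i => Metric.thickening (ε i) (I i)
  have hK : IsCompact (⋃ i, Metric.cthickening (ε i) (I i)) :=
    isCompact_iUnion fun i => (hI i).cthickening
  have hVK : ∀ i, V i ⊆ ⋃ i, Metric.cthickening (ε i) (I i) := fun i =>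
    (Metric.thickening_subset_cthickening _ _).trans
      (subset_iUnion (fun i => Metric.cthickening (ε i) (I i)) i)
  have hB (α : ℕ) : ∃ B, ∀ i j, adj i j → ∀ x ∈ V i, ∀ m ≤ α,
      ‖iteratedDeriv m (deriv (φm i j)) x‖ ≤ B := by
    obtain ⟨B, hB⟩ := hK.exists_forall_norm_iteratedDeriv_le
      (f := fun p : {p : Fin N × Fin N // adj p.1 p.2} => deriv (φm p.1.1 p.1.2))
      (fun p => (contDiff_infty_iff_deriv.1 (hφ _ _ p.2)).2) α
    exact ⟨B, fun i j h x hx => hB ⟨(i, j), h⟩ x (hVK i hx)⟩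
  have hBτ (α : ℕ) : ∃ B, ∀ i, ∀ x ∈ V i, ∀ m ≤ α, ‖iteratedDeriv m (deriv τ) x‖ ≤ B := by
    obtain ⟨B, hB⟩ := hK.exists_forall_norm_iteratedDeriv_le (f := fun _ : Unit => deriv τ)
      (fun _ => (contDiff_infty_iff_deriv.1 hτ).2) α
    exact ⟨B, fun i x hx => hB () x (hVK i hx)⟩
  refine ⟨θ₂, hθ₁0.trans hθ₁₂.le, hθ₂1, V, fun i => ⟨Metric.isOpen_thickening,
    ((hIconv i).thickening _).isPreconnected, Metric.self_subset_thickening (hε i) _⟩,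
    exists_norm_iteratedDeriv_zetaTerm_le hφ
      (fun i j h x hx => Metric.self_subset_thickening (hε j) _ (hV i j h x hx).2)
      (fun i j h x hx => (hV i j h x hx).1.le) hB hτ hBτ hθ₁0 hθ₁₂ hθ₂1.le⟩

theorem zeta_smooth_uniform_bounds_general
    {N : ℕ}
    (I : Fin N → Set ℝ)
    (hIcc : ∀ i, ∃ a b : ℝ, a ≤ b ∧ I i = Set.Icc a b)
    (adj : Fin N → Fin N → Prop)
    (htrans : ∃ T : ℕ, 0 < T ∧ ∀ i j, ∃ p : ℕ → Fin N,
      p 0 = i ∧ p T = j ∧ ∀ k < T, adj (p k) (p (k + 1)))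
    (φm : Fin N → Fin N → ℝ → ℝ)
    (θ : ℝ) (hθ0 : 0 < θ) (hθ1 : θ < 1)
    (hsmooth : ∀ i j, adj i j → ContDiff ℝ (⊤ : ℕ∞) (φm i j))
    (hcontr : ∀ i j, adj i j → ∀ x ∈ I i, 0 < deriv (φm i j) x ∧ deriv (φm i j) x ≤ θ)
    (hinto : ∀ i j, adj i j → φm i j '' I i ⊆ interior (I j))
    (τ : ℝ → ℝ) (hτ : ContDiff ℝ (⊤ : ℕ∞) τ) :
    ∃ ζ : {w : ℕ → Fin N // ∀ n, adj (w n) (w (n + 1))} → ℝ → ℝ,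
      (∀ w : {w : ℕ → Fin N // ∀ n, adj (w n) (w (n + 1))},
        ContDiffOn ℝ (⊤ : ℕ∞) (ζ w) (I (w.1 0))) ∧
      (∀ w : {w : ℕ → Fin N // ∀ n, adj (w n) (w (n + 1))}, ∀ α : ℕ,
        TendstoUniformlyOn
          (fun (n : ℕ) (x : ℝ) => iteratedDerivWithin α
            (fun y => -∑ k ∈ Finset.range n,
              deriv (compFwd φm w.1 (k + 1)) y * deriv τ (compFwd φm w.1 (k + 1) y))
            (I (w.1 0)) x)
          (iteratedDerivWithin α (ζ w) (I (w.1 0))) atTop (I (w.1 0))) ∧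
      (∀ α : ℕ, ∃ C : ℝ, 0 < C ∧
        ∀ w : {w : ℕ → Fin N // ∀ n, adj (w n) (w (n + 1))}, ∀ x ∈ I (w.1 0),
          |iteratedDerivWithin α (ζ w) (I (w.1 0)) x| ≤ C) := by
  choose a b hab hI using hIcc
  obtain rfl : I = fun i => Icc (a i) (b i) := funext hI
  have hUD (j : Fin N) : UniqueDiffOn ℝ (Icc (a j) (b j)) := by
    obtain ⟨i, hij⟩ := exists_adj_of_transitive htrans j
    exact uniqueDiffOn_convex (convex_Icc _ _)
      (((nonempty_Icc.2 (hab i)).image _).mono (hinto i j hij))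
  obtain ⟨θ₂, hθ₂0, hθ₂1, V, hV, hbound⟩ := exists_nhds_norm_iteratedDeriv_zetaTerm_le
    (fun _ => isCompact_Icc) (fun _ => convex_Icc _ _) hθ0 hθ1 hsmooth hcontr hinto hτ
  choose T hT using hbound
  have hsum (α : ℕ) : Summable (fun k => T α * θ₂ ^ k) :=
    (summable_geometric_of_lt_one hθ₂0 hθ₂1).mul_left _
  refine ⟨fun w => zeta φm τ w.1, fun w => ?_, fun w α => ?_, fun α => ?_⟩
  · exact (contDiffOn_tsum_of_isOpen (hV _).1 (hV _).2.1 (contDiff_zetaTerm hsmooth hτ w.2)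
      hsum (fun α k => hT α w.1 w.2 k)).mono (hV _).2.2
  · have := tendstoUniformlyOn_iteratedDerivWithin_sum_range (hV _).1 (hV _).2.1 (hUD _)
      (hV _).2.2 (contDiff_zetaTerm hsmooth hτ w.2) hsum (fun α k => hT α w.1 w.2 k) α
    simp only [zetaTerm, Finset.sum_neg_distrib] at this
    exact this
  · refine ⟨max 1 (T α * (1 - θ₂)⁻¹), one_pos.trans_le (le_max_left _ _), fun w x hx => ?_⟩
    have := norm_iteratedDerivWithin_tsum_le (hV _).1 (hV _).2.1 (hUD _) (hV _).2.2
      (contDiff_zetaTerm hsmooth hτ w.2) hsum (fun α k => hT α w.1 w.2 k) α hx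
    rw [tsum_mul_left, tsum_geometric_of_lt_one hθ₂0 hθ₂1] at this
    exact this.trans (le_max_right _ _)

/-- **Smoothness and uniform bounds for the stable-leaf functions ζ**
(Proposition 4.13). For each admissible right-infinite word `w₊` the series
`ζ_{w₊}(x) = −∑_{k≥1} (φ_{w_{0,k}})'(x) τ'(φ_{w_{0,k}}(x))` converges, together
with all `x`-derivatives, uniformly on `I_{w_0}`; it defines a `C^∞` function,
and all its derivatives are bounded uniformly in `w₊`. -/
theorem zeta_smooth_uniform_bounds
    {N : ℕ} (hN : 1 ≤ N)
    (I : Fin N → Set ℝ)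
    (hIcc : ∀ i, ∃ a b : ℝ, a ≤ b ∧ I i = Set.Icc a b)
    (hIdisj : ∀ i j, i ≠ j → Disjoint (I i) (I j))
    (adj : Fin N → Fin N → Prop)
    (htrans : ∃ T : ℕ, 0 < T ∧ ∀ i j, ∃ p : ℕ → Fin N,
      p 0 = i ∧ p T = j ∧ ∀ k < T, adj (p k) (p (k + 1)))
    (φm : Fin N → Fin N → ℝ → ℝ)
    (θ : ℝ) (hθ0 : 0 < θ) (hθ1 : θ < 1)
    (hsmooth : ∀ i j, adj i j → ContDiff ℝ (⊤ : ℕ∞) (φm i j))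
    (hcontr : ∀ i j, adj i j → ∀ x ∈ I i, 0 < deriv (φm i j) x ∧ deriv (φm i j) x ≤ θ)
    (hinto : ∀ i j, adj i j → φm i j '' I i ⊆ interior (I j))
    (hsep : ∀ i j k l, adj i j → adj k l → (i, j) ≠ (k, l) →
      Disjoint (φm i j '' I i) (φm k l '' I k))
    (τ : ℝ → ℝ) (hτ : ContDiff ℝ (⊤ : ℕ∞) τ) :
    ∃ ζ : {w : ℕ → Fin N // ∀ n, adj (w n) (w (n + 1))} → ℝ → ℝ,
      (∀ w : {w : ℕ → Fin N // ∀ n, adj (w n) (w (n + 1))},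
        ContDiffOn ℝ (⊤ : ℕ∞) (ζ w) (I (w.1 0))) ∧
      (∀ w : {w : ℕ → Fin N // ∀ n, adj (w n) (w (n + 1))}, ∀ α : ℕ,
        TendstoUniformlyOn
          (fun (n : ℕ) (x : ℝ) => iteratedDerivWithin α
            (fun y => -∑ k ∈ Finset.range n,
              deriv (compFwd φm w.1 (k + 1)) y * deriv τ (compFwd φm w.1 (k + 1) y))
            (I (w.1 0)) x)
          (iteratedDerivWithin α (ζ w) (I (w.1 0))) atTop (I (w.1 0))) ∧
      (∀ α : ℕ, ∃ C : ℝ, 0 < C ∧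
        ∀ w : {w : ℕ → Fin N // ∀ n, adj (w n) (w (n + 1))}, ∀ x ∈ I (w.1 0),
          |iteratedDerivWithin α (ζ w) (I (w.1 0)) x| ≤ C) :=
  zeta_smooth_uniform_bounds_general I hIcc adj htrans φm θ hθ0 hθ1 hsmooth hcontr hinto τ hτ
end

section
/- Fourier transform of the Taylor-projected remainder (Lemma 6.3): For any χ_0 ∈ C_c^∞(ℝ), any d ∈ ℕ, any φ ∈ C_c^∞(ℝ), any ħ > 0 and all ξ ∈ ℝ: F_ħ[ (χ_0 φ) − ∑_{k=0}^{d} Π_k φ ](ξ) = ħ^{−1/2} ( Ψ̃(ξ/ħ) − ∑_{k=0}^{d} (1/k!) (ξ/ħ)^k Ψ̃^{(k)}(0) ), where Ψ̃ := F_1[χ_0 φ] is the unit-Planck-constant Fourier transform of χ_0 φ and the left-hand side is the ħ-Fourier transform of the tempered distribution (χ_0 φ) − ∑_{k=0}^{d} Π_k φ. -/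
open MeasureTheory

/-- The unitary semiclassical Fourier transform
`(F_ħ φ)(ξ) = (2πħ)^{-1/2} ∫ e^{-ixξ/ħ} φ(x) dx`. -/
noncomputable def semiFourier (h : ℝ) (f : ℝ → ℂ) (ξ : ℝ) : ℂ :=
  ((Real.sqrt (2 * Real.pi * h) : ℝ) : ℂ)⁻¹ *
    ∫ x : ℝ, Complex.exp (-(Complex.I * x * ξ) / h) * f x

/-- The ħ-Fourier transform of the rank-one term
`Π_k φ = (1/k!) (∫ x^k χ₀(x) φ(x) dx) · δ^{(k)}`, namely
`ξ ↦ (1/k!) (∫ x^k χ₀ φ) (2πħ)^{-1/2} (−iξ/ħ)^k`. -/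
noncomputable def PiFT (χ₀ : ℝ → ℝ) (φ : ℝ → ℂ) (k : ℕ) (h ξ : ℝ) : ℂ :=
  ((k.factorial : ℂ))⁻¹ * (∫ x : ℝ, (x : ℂ) ^ k * (χ₀ x : ℂ) * φ x) *
    ((Real.sqrt (2 * Real.pi * h) : ℝ) : ℂ)⁻¹ * (-(Complex.I) * ξ / h) ^ k


open Real Complex FourierTransform

/-!
The substitution `ξ ↦ ξ / ħ` gives `F_ħ g (ξ) = ħ^{-1/2} F_1 g (ξ / ħ)`. Since `F_1 g (η)` is
Mathlib's Fourier transform of `(2π)^{-1/2} g` at `η / 2π`, differentiating under the integral sign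
gives `Ψ̃^{(k)}(0) = (2π)^{-1/2} (-i)^k ∫ x^k χ₀ φ`, which is exactly the moment in
`F_ħ Π_k φ (ξ) = ħ^{-1/2} (1/k!) (ξ/ħ)^k (2π)^{-1/2} (-i)^k ∫ x^k χ₀ φ`.
-/

lemma semiFourier_eq_inv_sqrt_mul_semiFourier_one (g : ℝ → ℂ) {h : ℝ} (hh : 0 < h) (ξ : ℝ) :
    semiFourier h g ξ = ((√h : ℝ) : ℂ)⁻¹ * semiFourier 1 g (ξ / h) := by
  have hsqrt : √(2 * π * h) = √(2 * π * 1) * √h := by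
    rw [mul_one, ← Real.sqrt_mul (by positivity)]
  have hphase (x : ℝ) : -(I * x * ((ξ / h : ℝ) : ℂ)) / ((1 : ℝ) : ℂ) = -(I * x * ξ) / h := by
    have : (h : ℂ) ≠ 0 := by exact_mod_cast hh.ne'
    push_cast
    field_simp
  simp only [semiFourier, hsqrt, hphase, ofReal_mul, mul_inv]
  ring

lemma semiFourier_one_eq_fourier (g : ℝ → ℂ) :
    semiFourier 1 g = fun ξ => 𝓕 (fun x => ((√(2 * π) : ℝ) : ℂ)⁻¹ * g x) ((2 * π)⁻¹ * ξ) := by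
  funext ξ
  have hphase (x : ℝ) :
      ((-2 * π * ((2 * π)⁻¹ * ξ * x) : ℝ) : ℂ) * I = -(I * x * ξ) / ((1 : ℝ) : ℂ) := by
    have : (π : ℂ) ≠ 0 := by exact_mod_cast pi_ne_zero
    push_cast
    field_simp
  simp only [semiFourier, fourier_eq', RCLike.inner_apply, conj_trivial, smul_eq_mul, hphase,
    mul_one, ← integral_const_mul]
  congr 1
  funext x
  ring

lemma iteratedDeriv_semiFourier_one_zero {g : ℝ → ℂ} {k : ℕ}
    (hg : ∀ n ≤ k, Integrable fun x : ℝ => x ^ n • g x) :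
    iteratedDeriv k (semiFourier 1 g) 0 =
      ((√(2 * π) : ℝ) : ℂ)⁻¹ * (-I) ^ k * ∫ x : ℝ, (x : ℂ) ^ k * g x := by
  set c : ℂ := ((√(2 * π) : ℝ) : ℂ)⁻¹
  have hcg : ∀ n : ℕ, (n : ℕ∞) ≤ k → Integrable fun x : ℝ => x ^ n • (c * g x) := fun n hn => by
    simpa only [smul_mul_assoc, mul_smul_comm] using (hg n (by exact_mod_cast hn)).const_mul c
  have hsmooth : ContDiff ℝ k (𝓕 fun x => c * g x) := contDiff_fourier fun n hn => by
    simpa only [norm_smul, norm_mul, norm_pow, norm_norm] using (hcg n hn).norm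
  rw [semiFourier_one_eq_fourier, iteratedDeriv_comp_const_smul hsmooth,
    iteratedDeriv_fourier hcg le_rfl]
  simp only [mul_zero, fourier_eq', inner_zero_right, zero_mul, ofReal_zero, Complex.exp_zero,
    one_mul, smul_eq_mul, real_smul, ← integral_const_mul]
  congr 1
  funext x
  have hscale : (((2 * π)⁻¹ : ℝ) : ℂ) * (-2 * π * I * x) = -I * x := by
    have : (π : ℂ) ≠ 0 := by exact_mod_cast pi_ne_zero
    push_cast
    field_simp
  rw [ofReal_pow, ← mul_assoc, ← mul_pow, hscale, mul_pow]
  ring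

lemma PiFT_eq_inv_sqrt_mul (χ₀ : ℝ → ℝ) (φ : ℝ → ℂ) (k : ℕ) (h ξ : ℝ) :
    PiFT χ₀ φ k h ξ = ((√h : ℝ) : ℂ)⁻¹ * ((k.factorial : ℂ)⁻¹ * ((ξ / h : ℝ) : ℂ) ^ k *
      (((√(2 * π) : ℝ) : ℂ)⁻¹ * (-I) ^ k * ∫ x : ℝ, (x : ℂ) ^ k * ((χ₀ x : ℂ) * φ x))) := by
  simp only [PiFT, Real.sqrt_mul (by positivity : (0 : ℝ) ≤ 2 * π), ofReal_mul, ofReal_div,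
    mul_inv, ← mul_assoc]
  ring

theorem fourier_taylor_remainder_general (χ₀ : ℝ → ℝ) (hχsm : ContDiff ℝ (⊤ : ℕ∞) χ₀)
    (hχc : HasCompactSupport χ₀)
    (φ : ℝ → ℂ) (hφsm : ContDiff ℝ (⊤ : ℕ∞) φ)
    (d : ℕ) (h : ℝ) (hh : 0 < h) (ξ : ℝ) :
    semiFourier h (fun x => (χ₀ x : ℂ) * φ x) ξ -
      ∑ k ∈ Finset.range (d + 1), PiFT χ₀ φ k h ξ =
    ((Real.sqrt h : ℝ) : ℂ)⁻¹ *
      (semiFourier 1 (fun x => (χ₀ x : ℂ) * φ x) (ξ / h) -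
        ∑ k ∈ Finset.range (d + 1),
          ((k.factorial : ℂ))⁻¹ * ((ξ / h : ℝ) : ℂ) ^ k *
            iteratedDeriv k (semiFourier 1 (fun x => (χ₀ x : ℂ) * φ x)) 0) := by
  set g : ℝ → ℂ := fun x => (χ₀ x : ℂ) * φ x
  have hg_cont : Continuous g := (continuous_ofReal.comp hχsm.continuous).mul hφsm.continuous
  have hg_supp : HasCompactSupport g := (hχc.comp_left ofReal_zero).mul_right
  have hg_moments (n : ℕ) : Integrable fun x : ℝ => x ^ n • g x :=
    ((continuous_pow n).smul hg_cont).integrable_of_hasCompactSupport hg_supp.smul_left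
  rw [semiFourier_eq_inv_sqrt_mul_semiFourier_one g hh, mul_sub, Finset.mul_sum]
  congr 1
  refine Finset.sum_congr rfl fun k _ => ?_
  rw [PiFT_eq_inv_sqrt_mul, iteratedDeriv_semiFourier_one_zero fun n _ => hg_moments n]

/-- **Fourier transform of the Taylor-projected remainder** (Lemma 6.3).
With `Ψ̃ := F₁[χ₀ φ]`, for all `ξ`:
`F_ħ[(χ₀φ) − ∑_{k=0}^d Π_k φ](ξ) = ħ^{-1/2} (Ψ̃(ξ/ħ) − ∑_{k=0}^d (1/k!)(ξ/ħ)^k Ψ̃^{(k)}(0))`. -/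
theorem fourier_taylor_remainder (χ₀ : ℝ → ℝ) (hχsm : ContDiff ℝ (⊤ : ℕ∞) χ₀)
    (hχc : HasCompactSupport χ₀)
    (φ : ℝ → ℂ) (hφsm : ContDiff ℝ (⊤ : ℕ∞) φ) (hφc : HasCompactSupport φ)
    (d : ℕ) (h : ℝ) (hh : 0 < h) (ξ : ℝ) :
    semiFourier h (fun x => (χ₀ x : ℂ) * φ x) ξ -
      ∑ k ∈ Finset.range (d + 1), PiFT χ₀ φ k h ξ =
    ((Real.sqrt h : ℝ) : ℂ)⁻¹ *
      (semiFourier 1 (fun x => (χ₀ x : ℂ) * φ x) (ξ / h) -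
        ∑ k ∈ Finset.range (d + 1),
          ((k.factorial : ℂ))⁻¹ * ((ξ / h : ℝ) : ℂ) ^ k *
            iteratedDeriv k (semiFourier 1 (fun x => (χ₀ x : ℂ) * φ x)) 0) :=
  fourier_taylor_remainder_general χ₀ hχsm hχc φ hφsm d h hh ξ
end

section
/- Operator norm of the Taylor projection remainder (Lemma 6.5): Let m ≥ 0 and d ∈ ℕ with d < m − 1/2, and let χ_0 ∈ C_c^∞(ℝ). Then there exists C > 0 such that for all 0 < ħ ≤ 1 and all φ ∈ C_c^∞(ℝ): ‖ (χ_0 φ) − ∑_{k=0}^{d} Π_k φ ‖_{H^{−m}_ħ} ≤ C ħ^{−d−1/2} ‖φ‖_{H^{−m}_ħ}. -/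
open MeasureTheory
open scoped ENNReal

/-- The semiclassical Sobolev norm `‖φ‖_{H^{-m}_ħ} = ‖⟨ξ⟩^{-m} F_ħ φ‖_{L²}`. -/
noncomputable def sobolevNorm (h m : ℝ) (f : ℝ → ℂ) : ℝ≥0∞ :=
  eLpNorm (fun ξ : ℝ => (((1 + ξ ^ 2) ^ (-(m / 2)) : ℝ) : ℂ) * semiFourier h f ξ) 2 volume

/-!
On the Fourier side everything is controlled by two facts. First, `F_ħ(χφ)` is
`(2πħ)^{-1/2}` times the convolution of `F_ħχ` and `F_ħφ` (Parseval), so Peetre's inequality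
`⟨ξ⟩^{-m} ≤ 2^{m/2} ⟨ξ - η⟩^m ⟨η⟩^{-m}` and Young's inequality give
`‖χφ‖_{H^{-m}_ħ} ≤ C ‖⟨·⟩^m F_ħχ‖_{L¹} ‖φ‖_{H^{-m}_ħ}`. Second, `F_ħ(Π_k φ)(ξ)` is
`ħ^{-k-1/2} ξ^k` times a multiple of `∫ x^k χ₀ φ`; this pairing is bounded by
`‖x^k χ₀‖_{H^m_ħ} ‖φ‖_{H^{-m}_ħ}`, and `⟨ξ⟩^{-m} ξ^k ∈ L²` exactly when `k < m - 1/2`.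
The remainder is then estimated term by term. All `ħ`-dependent constants are bounded by their
values at `ħ = 1`, because `F_ħ f(ξ) = ħ^{-1/2} F_1 f(ξ/ħ)` and `⟨ħu⟩ ≤ ⟨u⟩` for `ħ ≤ 1`.
-/

open Real FourierTransform
open scoped NNReal SchwartzMap

lemma Complex.enorm_ofReal_of_nonneg {x : ℝ} (hx : 0 ≤ x) : ‖(x : ℂ)‖ₑ = ENNReal.ofReal x := by
  rw [← ofReal_norm, Complex.norm_real, Real.norm_of_nonneg hx]

lemma semiFourier_eq_fourier (h : ℝ) (f : ℝ → ℂ) (ξ : ℝ) :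
    semiFourier h f ξ = ((√(2 * π * h) : ℝ) : ℂ)⁻¹ * 𝓕 f (ξ / (2 * π * h)) := by
  rw [semiFourier, Real.fourier_real_eq_integral_exp_smul]
  congr 1
  refine integral_congr_ae (.of_forall fun x => ?_)
  simp only [smul_eq_mul]
  congr 2
  push_cast
  field_simp

lemma semiFourier_eq_semiFourier_one {h : ℝ} (hh : 0 < h) (f : ℝ → ℂ) (ξ : ℝ) :
    semiFourier h f ξ = ((√h : ℝ) : ℂ)⁻¹ * semiFourier 1 f (ξ / h) := by
  rw [semiFourier, semiFourier, mul_one, ← mul_assoc, ← mul_inv, ← Complex.ofReal_mul,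
    ← Real.sqrt_mul hh.le, mul_comm h]
  congr 2 with x
  congr 2
  push_cast
  field_simp

lemma enorm_semiFourier {h : ℝ} (hh : 0 < h) (f : ℝ → ℂ) (ξ : ℝ) :
    ‖semiFourier h f ξ‖ₑ = ENNReal.ofReal (√h)⁻¹ * ‖semiFourier 1 f (ξ / h)‖ₑ := by
  rw [semiFourier_eq_semiFourier_one hh, enorm_mul, ← Complex.ofReal_inv,
    Complex.enorm_ofReal_of_nonneg (by positivity)]

lemma continuous_semiFourier (h : ℝ) {f : ℝ → ℂ} (hf : Integrable f) :
    Continuous (semiFourier h f) := by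
  simp_rw [funext (semiFourier_eq_fourier h f)]
  exact continuous_const.mul ((VectorFourier.fourierIntegral_continuous
    Real.continuous_fourierChar continuous_inner hf).comp (continuous_id.div_const _))

lemma SchwartzMap.exists_coe_eq_semiFourier (f : 𝓢(ℝ, ℂ)) {h : ℝ} (hh : h ≠ 0) :
    ∃ g : 𝓢(ℝ, ℂ), ⇑g = semiFourier h f := by
  have hc : (2 * π * h)⁻¹ ≠ 0 := by simp [hh, Real.pi_ne_zero]
  refine ⟨((√(2 * π * h) : ℝ) : ℂ)⁻¹ • SchwartzMap.compCLMOfContinuousLinearEquiv ℂ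
    (ContinuousLinearEquiv.unitsEquivAut ℝ (Units.mk0 _ hc)) (𝓕 f), ?_⟩
  funext ξ
  simp [semiFourier_eq_fourier h, SchwartzMap.fourier_coe, div_eq_mul_inv]

lemma SchwartzMap.eLpNorm_one_add_sq_rpow_mul_lt_top (g : 𝓢(ℝ, ℂ)) (r : ℝ) (p : ℝ≥0∞) :
    eLpNorm (fun x : ℝ => (((1 + x ^ 2) ^ r : ℝ) : ℂ) * g x) p volume < ⊤ := by
  have hw := Function.hasTemperateGrowth_one_add_norm_sq_rpow ℝ r
  have := (SchwartzMap.smulLeftCLM ℂ (fun x : ℝ => (1 + ‖x‖ ^ 2) ^ r) g).eLpNorm_lt_top p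
  rw [SchwartzMap.smulLeftCLM_apply hw] at this
  simpa [Complex.real_smul] using this

lemma integral_mul_eq_integral_fourier_mul_fourier_neg {g : ℝ → ℂ} (hg : Integrable g)
    (φ : 𝓢(ℝ, ℂ)) : ∫ x, g x * φ x = ∫ w, 𝓕 g w * 𝓕 (⇑φ) (-w) := by
  -- Write `φ = 𝓕 ψ` with `ψ = 𝓕⁻ φ`, move `𝓕` across the pairing, and use `ψ w = 𝓕 φ (-w)`.
  have hflip := VectorFourier.integral_fourierIntegral_smul_eq_flip (L := innerₗ ℝ)
    (μ := volume) (ν := volume) Real.continuous_fourierChar continuous_inner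
    (𝓕⁻ φ : 𝓢(ℝ, ℂ)).integrable hg
  rw [flip_innerₗ] at hflip
  change ∫ x, 𝓕 (⇑(𝓕⁻ φ : 𝓢(ℝ, ℂ))) x • g x = ∫ w, (𝓕⁻ φ : 𝓢(ℝ, ℂ)) w • 𝓕 g w at hflip
  rw [← SchwartzMap.fourier_coe, FourierTransform.fourier_fourierInv_eq] at hflip
  simp only [smul_eq_mul, SchwartzMap.fourierInv_coe, Real.fourierInv_eq_fourier_neg] at hflip
  simpa only [mul_comm] using hflip

lemma integral_mul_eq_integral_semiFourier_neg_mul {h : ℝ} (hh : 0 < h) {g : ℝ → ℂ}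
    (hg : Integrable g) (φ : 𝓢(ℝ, ℂ)) :
    ∫ x, g x * φ x = ∫ η, semiFourier h g (-η) * semiFourier h φ η := by
  have ha : 0 < 2 * π * h := by positivity
  have hsq : ((√(2 * π * h) : ℝ) : ℂ)⁻¹ * ((√(2 * π * h) : ℝ) : ℂ)⁻¹ = ((2 * π * h)⁻¹ : ℝ) := by
    rw [← mul_inv, ← Complex.ofReal_mul, Real.mul_self_sqrt ha.le, Complex.ofReal_inv]
  have hF : ∀ η, semiFourier h g (-η) * semiFourier h φ η
      = ((2 * π * h)⁻¹ : ℝ) * (𝓕 g (-(2 * π * h)⁻¹ * η) * 𝓕 (⇑φ) (-(-(2 * π * h)⁻¹ * η))) := by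
    intro η
    rw [semiFourier_eq_fourier, semiFourier_eq_fourier, ← hsq]
    ring_nf
  simp_rw [hF, integral_const_mul, Measure.integral_comp_mul_left
    (fun w => 𝓕 g w * 𝓕 (⇑φ) (-w)), ← integral_mul_eq_integral_fourier_mul_fourier_neg hg,
    inv_neg, inv_inv, abs_neg, abs_of_pos ha, Complex.real_smul, ← mul_assoc,
    ← Complex.ofReal_mul, inv_mul_cancel₀ ha.ne', Complex.ofReal_one, one_mul]

lemma semiFourier_mul_eq_integral {h : ℝ} (hh : 0 < h) {χ : ℝ → ℂ} (hχ : Integrable χ)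
    (φ : 𝓢(ℝ, ℂ)) (ξ : ℝ) :
    semiFourier h (fun x => χ x * φ x) ξ
      = ((√(2 * π * h) : ℝ) : ℂ)⁻¹ * ∫ η, semiFourier h χ (ξ - η) * semiFourier h φ η := by
  have hint : Integrable (fun x : ℝ => Complex.exp (-(Complex.I * x * ξ) / h) * χ x) := by
    refine hχ.bdd_mul (c := 1) (by fun_prop) (.of_forall fun x => ?_)
    rw [show -(Complex.I * x * ξ) / h = ((-(x * ξ / h) : ℝ) : ℂ) * Complex.I by push_cast; ring,
      Complex.norm_exp_ofReal_mul_I]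
  have hshift : ∀ η, semiFourier h (fun x => Complex.exp (-(Complex.I * x * ξ) / h) * χ x) (-η)
      = semiFourier h χ (ξ - η) := by
    intro η
    simp only [semiFourier]
    congr 2 with x
    rw [← mul_assoc, ← Complex.exp_add]
    congr 2
    push_cast
    ring
  simp_rw [← hshift, ← integral_mul_eq_integral_semiFourier_neg_mul hh hint φ, semiFourier,
    mul_assoc]

section L2

variable {α ε : Type*} [MeasurableSpace α] {μ : Measure α}

lemma sq_eLpNorm_two [ENorm ε] (f : α → ε) : eLpNorm f 2 μ ^ 2 = ∫⁻ x, ‖f x‖ₑ ^ 2 ∂μ := by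
  rw [show (2 : ℝ≥0∞) = ((2 : ℝ≥0) : ℝ≥0∞) from rfl, eLpNorm_nnreal_eq_lintegral two_ne_zero,
    ← ENNReal.rpow_natCast, ← ENNReal.rpow_mul]
  norm_num

lemma sq_lintegral_mul_le {f g : α → ℝ≥0∞} (hf : AEMeasurable f μ) (hg : AEMeasurable g μ) :
    (∫⁻ x, f x * g x ∂μ) ^ 2 ≤ (∫⁻ x, f x ^ 2 ∂μ) * ∫⁻ x, g x ^ 2 ∂μ := by
  have hCS := ENNReal.lintegral_mul_le_Lp_mul_Lq μ Real.HolderConjugate.two_two hf hg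
  simp only [Pi.mul_apply, ENNReal.rpow_two] at hCS
  calc (∫⁻ x, f x * g x ∂μ) ^ 2
      ≤ ((∫⁻ x, f x ^ 2 ∂μ) ^ (1 / 2 : ℝ) * (∫⁻ x, g x ^ 2 ∂μ) ^ (1 / 2 : ℝ)) ^ 2 := by gcongr
    _ = (∫⁻ x, f x ^ 2 ∂μ) * ∫⁻ x, g x ^ 2 ∂μ := by
      rw [mul_pow, ← ENNReal.rpow_natCast, ← ENNReal.rpow_natCast, ← ENNReal.rpow_mul,
        ← ENNReal.rpow_mul]
      norm_num

end L2

section Young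

variable {G : Type*} [AddCommGroup G] [MeasurableSpace G] [MeasurableAdd₂ G] [MeasurableNeg G]
  {μ : Measure G} [μ.IsAddLeftInvariant] [μ.IsNegInvariant]

lemma sq_lintegral_mul_sub_le {K V : G → ℝ≥0∞} (hK : Measurable K) (hV : Measurable V) (ξ : G) :
    (∫⁻ η, K (ξ - η) * V η ∂μ) ^ 2 ≤ (∫⁻ ρ, K ρ ∂μ) * ∫⁻ η, K (ξ - η) * V η ^ 2 ∂μ := by
  have hKξ : Measurable fun η => K (ξ - η) := hK.comp (measurable_const.sub measurable_id)
  have hsqrt : ∀ a : ℝ≥0∞, (a ^ (1 / 2 : ℝ)) ^ 2 = a := fun a => by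
    rw [← ENNReal.rpow_natCast, ← ENNReal.rpow_mul]; norm_num
  have hCS := sq_lintegral_mul_le (μ := μ) (f := fun η => K (ξ - η) ^ (1 / 2 : ℝ))
    (g := fun η => K (ξ - η) ^ (1 / 2 : ℝ) * V η) (hKξ.pow_const _).aemeasurable
    ((hKξ.pow_const _).mul hV).aemeasurable
  simp only [mul_pow, ← mul_assoc, ← sq, hsqrt] at hCS
  rwa [(μ.measurePreserving_sub_left ξ).lintegral_comp hK] at hCS

lemma eLpNorm_two_lintegral_mul_sub_le [SFinite μ] {K V : G → ℝ≥0∞} (hK : Measurable K)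
    (hV : Measurable V) :
    eLpNorm (fun ξ => ∫⁻ η, K (ξ - η) * V η ∂μ) 2 μ ≤ (∫⁻ ρ, K ρ ∂μ) * eLpNorm V 2 μ := by
  rw [← ENNReal.pow_le_pow_left_iff two_ne_zero, mul_pow, sq_eLpNorm_two, sq_eLpNorm_two]
  simp only [enorm_eq_self]
  have hmeas : Measurable (Function.uncurry fun ξ η => K (ξ - η) * V η ^ 2) :=
    (hK.comp (measurable_fst.sub measurable_snd)).mul ((hV.pow_const 2).comp measurable_snd)
  calc ∫⁻ ξ, (∫⁻ η, K (ξ - η) * V η ∂μ) ^ 2 ∂μ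
      ≤ ∫⁻ ξ, (∫⁻ ρ, K ρ ∂μ) * ∫⁻ η, K (ξ - η) * V η ^ 2 ∂μ ∂μ :=
        lintegral_mono fun ξ => sq_lintegral_mul_sub_le hK hV ξ
    _ = (∫⁻ ρ, K ρ ∂μ) * ∫⁻ η, (∫⁻ ξ, K (ξ - η) ∂μ) * V η ^ 2 ∂μ := by
        have hint : Measurable fun ξ => ∫⁻ η, K (ξ - η) * V η ^ 2 ∂μ :=
          hmeas.lintegral_prod_right'
        rw [lintegral_const_mul _ hint, lintegral_lintegral_swap hmeas.aemeasurable]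
        congr 1
        exact lintegral_congr fun η =>
          lintegral_mul_const _ (hK.comp (measurable_id.sub measurable_const))
    _ = (∫⁻ ρ, K ρ ∂μ) ^ 2 * ∫⁻ η, V η ^ 2 ∂μ := by
        simp_rw [(measurePreserving_sub_right μ _).lintegral_comp hK, lintegral_const_mul _
          (hV.pow_const 2), sq, mul_assoc]

end Young

lemma continuous_one_add_sq_rpow (r : ℝ) : Continuous fun ξ : ℝ => (1 + ξ ^ 2) ^ r :=
  (continuous_const.add (continuous_pow 2)).rpow_const fun ξ =>
    Or.inl (by positivity : (1 : ℝ) + ξ ^ 2 ≠ 0)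

lemma one_add_sq_le_two_mul_mul (ξ η : ℝ) : 1 + η ^ 2 ≤ 2 * (1 + (ξ - η) ^ 2) * (1 + ξ ^ 2) := by
  nlinarith [sq_nonneg (ξ + (ξ - η)), sq_nonneg (ξ * (ξ - η))]

lemma one_add_sq_rpow_neg_le {s : ℝ} (hs : 0 ≤ s) (ξ η : ℝ) :
    (1 + ξ ^ 2) ^ (-s) ≤ 2 ^ s * (1 + (ξ - η) ^ 2) ^ s * (1 + η ^ 2) ^ (-s) := by
  have hpeetre := Real.rpow_le_rpow (by positivity) (one_add_sq_le_two_mul_mul ξ η) hs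
  rw [Real.mul_rpow (by positivity) (by positivity), Real.mul_rpow (by positivity)
    (by positivity)] at hpeetre
  rw [Real.rpow_neg (by positivity), Real.rpow_neg (by positivity), ← div_eq_mul_inv,
    inv_le_comm₀ (by positivity) (by positivity), inv_div, div_le_iff₀ (by positivity)]
  linarith

lemma enorm_one_add_sq_rpow_mul (r ξ : ℝ) (z : ℂ) :
    ‖(((1 + ξ ^ 2) ^ r : ℝ) : ℂ) * z‖ₑ = ENNReal.ofReal ((1 + ξ ^ 2) ^ r) * ‖z‖ₑ := by
  rw [enorm_mul, Complex.enorm_ofReal_of_nonneg (by positivity)]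

lemma sq_enorm_one_add_sq_rpow_mul (s ξ : ℝ) (z : ℂ) :
    ‖(((1 + ξ ^ 2) ^ (-(s / 2)) : ℝ) : ℂ) * z‖ₑ ^ 2
      = ENNReal.ofReal ((1 + ξ ^ 2) ^ (-s)) * ‖z‖ₑ ^ 2 := by
  rw [enorm_one_add_sq_rpow_mul, mul_pow, ← ENNReal.ofReal_pow (by positivity),
    ← Real.rpow_natCast, ← Real.rpow_mul (by positivity)]
  norm_num

lemma lintegral_comp_div {a : ℝ} (ha : 0 < a) (F : ℝ → ℝ≥0∞) :
    ∫⁻ x, F (x / a) = ENNReal.ofReal a * ∫⁻ y, F y := by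
  have ha' : a⁻¹ ≠ 0 := inv_ne_zero ha.ne'
  simp_rw [div_eq_inv_mul]
  rw [← (measurableEmbedding_mulLeft₀ ha').lintegral_map, Real.map_volume_mul_left ha',
    lintegral_smul_measure, inv_inv, abs_of_pos ha, smul_eq_mul]

lemma lintegral_one_add_sq_rpow_mul_comp_div_le {h : ℝ} (hh : 0 < h) (hh1 : h ≤ 1) {r : ℝ}
    (hr : 0 ≤ r) (F : ℝ → ℝ≥0∞) :
    ∫⁻ x, ENNReal.ofReal ((1 + x ^ 2) ^ r) * F (x / h)
      ≤ ENNReal.ofReal h * ∫⁻ y, ENNReal.ofReal ((1 + y ^ 2) ^ r) * F y := by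
  calc ∫⁻ x, ENNReal.ofReal ((1 + x ^ 2) ^ r) * F (x / h)
      = ENNReal.ofReal h * ∫⁻ y, ENNReal.ofReal ((1 + (h * y) ^ 2) ^ r) * F y := by
        rw [← lintegral_comp_div hh]
        simp_rw [mul_div_cancel₀ _ hh.ne']
    _ ≤ ENNReal.ofReal h * ∫⁻ y, ENNReal.ofReal ((1 + y ^ 2) ^ r) * F y := by
        gcongr _ * ∫⁻ y, ENNReal.ofReal ((1 + ?_) ^ r) * _ with y
        rw [mul_pow]
        nlinarith [sq_nonneg y, mul_le_one₀ hh1 hh.le hh1]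

lemma sobolevNorm_le_sobolevNorm_one {h : ℝ} (hh : 0 < h) (hh1 : h ≤ 1) {s : ℝ} (hs : s ≤ 0)
    (f : ℝ → ℂ) : sobolevNorm h s f ≤ sobolevNorm 1 s f := by
  rw [sobolevNorm, sobolevNorm, ← ENNReal.pow_le_pow_left_iff two_ne_zero, sq_eLpNorm_two,
    sq_eLpNorm_two]
  simp_rw [sq_enorm_one_add_sq_rpow_mul, enorm_semiFourier hh, mul_pow,
    ← ENNReal.ofReal_pow (inv_nonneg.2 (Real.sqrt_nonneg h)), inv_pow, Real.sq_sqrt hh.le,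
    mul_left_comm _ (ENNReal.ofReal h⁻¹), lintegral_const_mul' _ _ ENNReal.ofReal_ne_top]
  calc ENNReal.ofReal h⁻¹
        * ∫⁻ ξ, ENNReal.ofReal ((1 + ξ ^ 2) ^ (-s)) * ‖semiFourier 1 f (ξ / h)‖ₑ ^ 2
      ≤ ENNReal.ofReal h⁻¹ * (ENNReal.ofReal h *
          ∫⁻ u, ENNReal.ofReal ((1 + u ^ 2) ^ (-s)) * ‖semiFourier 1 f u‖ₑ ^ 2) := by
        gcongr
        exact lintegral_one_add_sq_rpow_mul_comp_div_le hh hh1 (neg_nonneg.2 hs) _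
    _ = ∫⁻ u, ENNReal.ofReal ((1 + u ^ 2) ^ (-s)) * ‖semiFourier 1 f u‖ₑ ^ 2 := by
        rw [← mul_assoc, ← ENNReal.ofReal_mul (by positivity), inv_mul_cancel₀ hh.ne',
          ENNReal.ofReal_one, one_mul]

lemma lintegral_one_add_sq_rpow_mul_enorm_semiFourier_le {h : ℝ} (hh : 0 < h) (hh1 : h ≤ 1)
    {r : ℝ} (hr : 0 ≤ r) (f : ℝ → ℂ) :
    ∫⁻ ξ, ENNReal.ofReal ((1 + ξ ^ 2) ^ r) * ‖semiFourier h f ξ‖ₑ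
      ≤ ENNReal.ofReal (√h) * ∫⁻ u, ENNReal.ofReal ((1 + u ^ 2) ^ r) * ‖semiFourier 1 f u‖ₑ := by
  simp_rw [enorm_semiFourier hh, mul_left_comm _ (ENNReal.ofReal (√h)⁻¹),
    lintegral_const_mul' _ _ ENNReal.ofReal_ne_top]
  calc ENNReal.ofReal (√h)⁻¹ * ∫⁻ ξ, ENNReal.ofReal ((1 + ξ ^ 2) ^ r) * ‖semiFourier 1 f (ξ / h)‖ₑ
      ≤ ENNReal.ofReal (√h)⁻¹ * (ENNReal.ofReal h *
          ∫⁻ u, ENNReal.ofReal ((1 + u ^ 2) ^ r) * ‖semiFourier 1 f u‖ₑ) := by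
        gcongr
        exact lintegral_one_add_sq_rpow_mul_comp_div_le hh hh1 hr _
    _ = ENNReal.ofReal (√h) * ∫⁻ u, ENNReal.ofReal ((1 + u ^ 2) ^ r) * ‖semiFourier 1 f u‖ₑ := by
        rw [← mul_assoc, ← ENNReal.ofReal_mul (by positivity), ← div_eq_inv_mul, Real.div_sqrt]

lemma enorm_integral_mul_le_sobolevNorm_mul {h : ℝ} (hh : 0 < h) (m : ℝ) {g : ℝ → ℂ}
    (hg : Integrable g) (φ : 𝓢(ℝ, ℂ)) :
    ‖∫ x, g x * φ x‖ₑ ≤ sobolevNorm h (-m) g * sobolevNorm h m φ := by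
  set u : ℝ → ℂ := fun η => (((1 + η ^ 2) ^ (-(-m / 2)) : ℝ) : ℂ) * semiFourier h g η
  set v : ℝ → ℂ := fun η => (((1 + η ^ 2) ^ (-(m / 2)) : ℝ) : ℂ) * semiFourier h φ η
  have hu : Continuous u := (Complex.continuous_ofReal.comp (continuous_one_add_sq_rpow _)).mul
    (continuous_semiFourier h hg)
  have hv : Continuous v := (Complex.continuous_ofReal.comp (continuous_one_add_sq_rpow _)).mul
    (continuous_semiFourier h φ.integrable)
  have huv : ∀ η, semiFourier h g (-η) * semiFourier h φ η = (u ∘ Neg.neg) η * v η := by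
    intro η
    simp only [u, v, Function.comp_apply, neg_sq]
    rw [mul_mul_mul_comm, ← Complex.ofReal_mul, ← Real.rpow_add (by positivity),
      show -(-m / 2) + -(m / 2) = 0 by ring, Real.rpow_zero, Complex.ofReal_one, one_mul]
  calc ‖∫ x, g x * φ x‖ₑ
      = ‖∫ η, (u ∘ Neg.neg) η * v η‖ₑ := by
        rw [integral_mul_eq_integral_semiFourier_neg_mul hh hg φ]
        simp_rw [huv]
    _ ≤ eLpNorm ((u ∘ Neg.neg) • v) 1 volume := by
        rw [eLpNorm_one_eq_lintegral_enorm]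
        exact enorm_integral_le_lintegral_enorm _
    _ ≤ eLpNorm (u ∘ Neg.neg) 2 volume * eLpNorm v 2 volume :=
        eLpNorm_smul_le_mul_eLpNorm hv.aestronglyMeasurable
          (hu.comp continuous_neg).aestronglyMeasurable
    _ = sobolevNorm h (-m) g * sobolevNorm h m φ := by
        rw [eLpNorm_comp_measurePreserving hu.aestronglyMeasurable
          (Measure.measurePreserving_neg volume)]
        rfl

lemma enorm_one_add_sq_rpow_mul_semiFourier_mul_le {m : ℝ} (hm : 0 ≤ m) {h : ℝ} (hh : 0 < h)
    {χ : ℝ → ℂ} (hχ : Integrable χ) (φ : 𝓢(ℝ, ℂ)) (ξ : ℝ) :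
    ‖(((1 + ξ ^ 2) ^ (-(m / 2)) : ℝ) : ℂ) * semiFourier h (fun x => χ x * φ x) ξ‖ₑ
      ≤ ∫⁻ η, ENNReal.ofReal (2 ^ (m / 2) / √(2 * π * h) * (1 + (ξ - η) ^ 2) ^ (m / 2))
          * ‖semiFourier h χ (ξ - η)‖ₑ
          * ‖(((1 + η ^ 2) ^ (-(m / 2)) : ℝ) : ℂ) * semiFourier h φ η‖ₑ := by
  rw [semiFourier_mul_eq_integral hh hχ, ← mul_assoc, ← Complex.ofReal_inv,
    ← Complex.ofReal_mul, enorm_mul, Complex.enorm_ofReal_of_nonneg (by positivity)]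
  grw [enorm_integral_le_lintegral_enorm, ← lintegral_const_mul' _ _ ENNReal.ofReal_ne_top]
  refine lintegral_mono fun η => ?_
  have hpeetre : (1 + ξ ^ 2) ^ (-(m / 2)) * (√(2 * π * h))⁻¹
      ≤ 2 ^ (m / 2) / √(2 * π * h) * (1 + (ξ - η) ^ 2) ^ (m / 2) * (1 + η ^ 2) ^ (-(m / 2)) := by
    grw [one_add_sq_rpow_neg_le (by positivity : 0 ≤ m / 2) ξ η]
    exact le_of_eq (by ring)
  calc ENNReal.ofReal ((1 + ξ ^ 2) ^ (-(m / 2)) * (√(2 * π * h))⁻¹)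
        * ‖semiFourier h χ (ξ - η) * semiFourier h φ η‖ₑ
      ≤ ENNReal.ofReal (2 ^ (m / 2) / √(2 * π * h) * (1 + (ξ - η) ^ 2) ^ (m / 2)
          * (1 + η ^ 2) ^ (-(m / 2))) * (‖semiFourier h χ (ξ - η)‖ₑ * ‖semiFourier h φ η‖ₑ) := by
        rw [enorm_mul]
        gcongr
    _ = _ := by
        rw [enorm_one_add_sq_rpow_mul, ENNReal.ofReal_mul (by positivity)]
        ring

lemma sobolevNorm_mul_le {m : ℝ} (hm : 0 ≤ m) {h : ℝ} (hh : 0 < h) (hh1 : h ≤ 1)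
    {χ : ℝ → ℂ} (hχ : Integrable χ) (φ : 𝓢(ℝ, ℂ)) :
    sobolevNorm h m (fun x => χ x * φ x)
      ≤ ENNReal.ofReal (2 ^ (m / 2) / √(2 * π))
          * (∫⁻ u, ENNReal.ofReal ((1 + u ^ 2) ^ (m / 2)) * ‖semiFourier 1 χ u‖ₑ)
          * sobolevNorm h m φ := by
  set K : ℝ → ℝ≥0∞ := fun ρ => ENNReal.ofReal (2 ^ (m / 2) / √(2 * π * h) * (1 + ρ ^ 2) ^ (m / 2))
    * ‖semiFourier h χ ρ‖ₑ
  have hK : Measurable K := by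
    refine (ENNReal.measurable_ofReal.comp ?_).mul (continuous_semiFourier h hχ).measurable.enorm
    exact (continuous_const.mul (continuous_one_add_sq_rpow _)).measurable
  have hV : Measurable fun η => ‖(((1 + η ^ 2) ^ (-(m / 2)) : ℝ) : ℂ) * semiFourier h φ η‖ₑ :=
    ((Complex.continuous_ofReal.comp (continuous_one_add_sq_rpow _)).mul
      (continuous_semiFourier h φ.integrable)).measurable.enorm
  have hmass : ∫⁻ ρ, K ρ ≤ ENNReal.ofReal (2 ^ (m / 2) / √(2 * π))
      * ∫⁻ u, ENNReal.ofReal ((1 + u ^ 2) ^ (m / 2)) * ‖semiFourier 1 χ u‖ₑ := by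
    have hK' : ∀ ρ, K ρ = ENNReal.ofReal (2 ^ (m / 2) / √(2 * π * h))
        * (ENNReal.ofReal ((1 + ρ ^ 2) ^ (m / 2)) * ‖semiFourier h χ ρ‖ₑ) := fun ρ => by
      simp only [K]
      rw [ENNReal.ofReal_mul (by positivity), mul_assoc]
    rw [lintegral_congr hK', lintegral_const_mul' _ _ ENNReal.ofReal_ne_top]
    calc ENNReal.ofReal (2 ^ (m / 2) / √(2 * π * h))
          * ∫⁻ ρ, ENNReal.ofReal ((1 + ρ ^ 2) ^ (m / 2)) * ‖semiFourier h χ ρ‖ₑ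
        ≤ ENNReal.ofReal (2 ^ (m / 2) / √(2 * π * h)) * (ENNReal.ofReal (√h)
            * ∫⁻ u, ENNReal.ofReal ((1 + u ^ 2) ^ (m / 2)) * ‖semiFourier 1 χ u‖ₑ) := by
          gcongr
          exact lintegral_one_add_sq_rpow_mul_enorm_semiFourier_le hh hh1 (by positivity) χ
      _ = _ := by
          rw [← mul_assoc, ← ENNReal.ofReal_mul (by positivity), Real.sqrt_mul (by positivity),
            div_mul_eq_div_div, div_mul_cancel₀ _ (by positivity)]
  calc sobolevNorm h m (fun x => χ x * φ x)
      ≤ eLpNorm (fun ξ => ∫⁻ η, K (ξ - η)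
          * ‖(((1 + η ^ 2) ^ (-(m / 2)) : ℝ) : ℂ) * semiFourier h φ η‖ₑ) 2 volume :=
        eLpNorm_mono_enorm fun ξ => by
          simpa only [enorm_eq_self] using enorm_one_add_sq_rpow_mul_semiFourier_mul_le hm hh hχ φ ξ
    _ ≤ (∫⁻ ρ, K ρ) * sobolevNorm h m φ := by
        rw [sobolevNorm, ← eLpNorm_enorm]
        exact eLpNorm_two_lintegral_mul_sub_le hK hV
    _ ≤ _ := by gcongr

lemma exists_sobolevNorm_mul_le {m : ℝ} (hm : 0 ≤ m) {χ : ℝ → ℂ}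
    (hχsm : ContDiff ℝ (⊤ : ℕ∞) χ) (hχc : HasCompactSupport χ) :
    ∃ C : ℝ≥0, ∀ h : ℝ, 0 < h → h ≤ 1 → ∀ φ : ℝ → ℂ, ContDiff ℝ (⊤ : ℕ∞) φ →
      HasCompactSupport φ → sobolevNorm h m (fun x => χ x * φ x) ≤ C * sobolevNorm h m φ := by
  obtain ⟨g, hg⟩ := (hχc.toSchwartzMap hχsm).exists_coe_eq_semiFourier one_ne_zero
  have hM : ∫⁻ u, ENNReal.ofReal ((1 + u ^ 2) ^ (m / 2)) * ‖semiFourier 1 χ u‖ₑ ≠ ⊤ := by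
    simp_rw [show semiFourier 1 χ = g from hg.symm, ← enorm_one_add_sq_rpow_mul,
      ← eLpNorm_one_eq_lintegral_enorm]
    exact (g.eLpNorm_one_add_sq_rpow_mul_lt_top _ 1).ne
  refine ⟨(ENNReal.ofReal (2 ^ (m / 2) / √(2 * π))
    * ∫⁻ u, ENNReal.ofReal ((1 + u ^ 2) ^ (m / 2)) * ‖semiFourier 1 χ u‖ₑ).toNNReal,
    fun h hh hh1 φ hφsm hφc => ?_⟩
  rw [ENNReal.coe_toNNReal (ENNReal.mul_ne_top ENNReal.ofReal_ne_top hM)]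
  exact sobolevNorm_mul_le hm hh hh1 (hχsm.continuous.integrable_of_hasCompactSupport hχc)
    (hφc.toSchwartzMap hφsm)

lemma eLpNorm_one_add_sq_rpow_mul_pow_lt_top {m : ℝ} {k : ℕ} (hk : (k : ℝ) < m - 1 / 2) :
    eLpNorm (fun ξ : ℝ => (((1 + ξ ^ 2) ^ (-(m / 2)) : ℝ) : ℂ) * (ξ : ℂ) ^ k) 2 volume < ⊤ := by
  have hmeas : AEStronglyMeasurable
      (fun ξ : ℝ => (((1 + ξ ^ 2) ^ (-(m / 2)) : ℝ) : ℂ) * (ξ : ℂ) ^ k) volume :=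
    ((Complex.continuous_ofReal.comp (continuous_one_add_sq_rpow _)).mul
      (Complex.continuous_ofReal.pow k)).aestronglyMeasurable
  refine ((memLp_two_iff_integrable_sq_norm hmeas).2 ?_).eLpNorm_lt_top
  have hint := integrable_rpow_neg_one_add_norm_sq (E := ℝ) (μ := volume) (r := 2 * (m - k))
    (by simp only [Module.finrank_self, Nat.cast_one]; linarith)
  refine hint.mono' (hmeas.norm.pow 2) (.of_forall fun ξ => ?_)
  have hξ : (0 : ℝ) < 1 + ξ ^ 2 := by positivity
  rw [norm_pow, norm_norm, Real.norm_eq_abs ξ, sq_abs]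
  calc ‖(((1 + ξ ^ 2) ^ (-(m / 2)) : ℝ) : ℂ) * (ξ : ℂ) ^ k‖ ^ 2
      = (1 + ξ ^ 2) ^ (-m) * (ξ ^ 2) ^ k := by
        rw [norm_mul, norm_pow, Complex.norm_real, Complex.norm_real, Real.norm_of_nonneg
          (by positivity), Real.norm_eq_abs, mul_pow, ← pow_mul, mul_comm k, pow_mul, sq_abs,
          ← Real.rpow_natCast, ← Real.rpow_mul hξ.le]
        ring_nf
    _ ≤ (1 + ξ ^ 2) ^ (-m) * (1 + ξ ^ 2) ^ k := by
        gcongr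
        linarith
    _ = (1 + ξ ^ 2) ^ (-(2 * (m - k)) / 2) := by
        rw [← Real.rpow_natCast (1 + ξ ^ 2) k, ← Real.rpow_add hξ]
        ring_nf

lemma eLpNorm_one_add_sq_rpow_mul_PiFT {h : ℝ} (hh : 0 < h) (m : ℝ) (χ₀ : ℝ → ℝ) (φ : ℝ → ℂ)
    (k : ℕ) :
    eLpNorm (fun ξ => (((1 + ξ ^ 2) ^ (-(m / 2)) : ℝ) : ℂ) * PiFT χ₀ φ k h ξ) 2 volume
      = ENNReal.ofReal ((k.factorial : ℝ)⁻¹ / √(2 * π) * h ^ (-(k : ℝ) - 1 / 2))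
        * ‖∫ x : ℝ, (x : ℂ) ^ k * χ₀ x * φ x‖ₑ
        * eLpNorm (fun ξ => (((1 + ξ ^ 2) ^ (-(m / 2)) : ℝ) : ℂ) * (ξ : ℂ) ^ k) 2 volume := by
  set a : ℂ := (k.factorial : ℂ)⁻¹ * (∫ x : ℝ, (x : ℂ) ^ k * χ₀ x * φ x)
    * ((√(2 * π * h) : ℝ) : ℂ)⁻¹ * (-Complex.I / h) ^ k
  have hfun : (fun ξ => (((1 + ξ ^ 2) ^ (-(m / 2)) : ℝ) : ℂ) * PiFT χ₀ φ k h ξ)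
      = a • fun ξ => (((1 + ξ ^ 2) ^ (-(m / 2)) : ℝ) : ℂ) * (ξ : ℂ) ^ k := by
    funext ξ
    simp only [PiFT, a, Pi.smul_apply, smul_eq_mul, mul_div_right_comm _ (ξ : ℂ), mul_pow]
    ring
  have hscale : (√(2 * π * h))⁻¹ * (h ^ k)⁻¹ = (√(2 * π))⁻¹ * h ^ (-(k : ℝ) - 1 / 2) := by
    rw [Real.sqrt_mul (by positivity), Real.sqrt_eq_rpow h, Real.rpow_sub hh, Real.rpow_neg hh.le,
      Real.rpow_natCast, mul_inv]
    field_simp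
  rw [hfun, eLpNorm_const_smul, ← ofReal_norm]
  congr 1
  simp only [a, norm_mul, norm_inv, norm_pow, norm_div, norm_neg, Complex.norm_I,
    Complex.norm_natCast, Complex.norm_real, Real.norm_of_nonneg hh.le,
    Real.norm_of_nonneg (Real.sqrt_nonneg _)]
  rw [← ofReal_norm, ← ENNReal.ofReal_mul (by positivity)]
  congr 1
  rw [div_eq_mul_inv (k.factorial : ℝ)⁻¹, mul_assoc _ (√(2 * π))⁻¹, ← hscale, one_div, inv_pow]
  ring

lemma continuous_PiFT (χ₀ : ℝ → ℝ) (φ : ℝ → ℂ) (k : ℕ) (h : ℝ) : Continuous (PiFT χ₀ φ k h) := by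
  unfold PiFT
  fun_prop

lemma exists_eLpNorm_one_add_sq_rpow_mul_PiFT_le {m : ℝ} {k : ℕ} (hk : (k : ℝ) < m - 1 / 2)
    {χ₀ : ℝ → ℝ} (hχsm : ContDiff ℝ (⊤ : ℕ∞) χ₀) (hχc : HasCompactSupport χ₀) :
    ∃ C : ℝ≥0, ∀ h : ℝ, 0 < h → h ≤ 1 → ∀ φ : ℝ → ℂ, ContDiff ℝ (⊤ : ℕ∞) φ →
      HasCompactSupport φ →
      eLpNorm (fun ξ => (((1 + ξ ^ 2) ^ (-(m / 2)) : ℝ) : ℂ) * PiFT χ₀ φ k h ξ) 2 volume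
        ≤ C * ENNReal.ofReal (h ^ (-(k : ℝ) - 1 / 2)) * sobolevNorm h m φ := by
  have hm : 0 ≤ m := by linarith [k.cast_nonneg (α := ℝ)]
  set G : 𝓢(ℝ, ℂ) := HasCompactSupport.toSchwartzMap (f := fun x : ℝ => (x : ℂ) ^ k * χ₀ x)
    (hχc.comp_left Complex.ofReal_zero).mul_left
    ((Complex.ofRealCLM.contDiff.pow k).mul (Complex.ofRealCLM.contDiff.comp hχsm))
  obtain ⟨g, hg⟩ := G.exists_coe_eq_semiFourier one_ne_zero
  have hG : sobolevNorm 1 (-m) G ≠ ⊤ := by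
    rw [sobolevNorm, ← hg]
    exact (g.eLpNorm_one_add_sq_rpow_mul_lt_top _ 2).ne
  set C : ℝ≥0∞ := ENNReal.ofReal ((k.factorial : ℝ)⁻¹ / √(2 * π)) * sobolevNorm 1 (-m) G
    * eLpNorm (fun ξ => (((1 + ξ ^ 2) ^ (-(m / 2)) : ℝ) : ℂ) * (ξ : ℂ) ^ k) 2 volume
  have hC : C ≠ ⊤ := ENNReal.mul_ne_top (ENNReal.mul_ne_top ENNReal.ofReal_ne_top hG)
    (eLpNorm_one_add_sq_rpow_mul_pow_lt_top hk).ne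
  refine ⟨C.toNNReal, fun h hh hh1 φ hφsm hφc => ?_⟩
  have hpair : ‖∫ x : ℝ, (x : ℂ) ^ k * χ₀ x * φ x‖ₑ ≤ sobolevNorm 1 (-m) G * sobolevNorm h m φ :=
    (enorm_integral_mul_le_sobolevNorm_mul hh m G.integrable (hφc.toSchwartzMap hφsm)).trans
      (mul_le_mul' (sobolevNorm_le_sobolevNorm_one hh hh1 (by linarith) G) le_rfl)
  rw [eLpNorm_one_add_sq_rpow_mul_PiFT hh, ENNReal.coe_toNNReal hC,
    ENNReal.ofReal_mul (by positivity)]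
  grw [hpair]
  exact le_of_eq (by ring)

lemma eLpNorm_mul_sub_sum_le {α ι R : Type*} [MeasurableSpace α] {μ : Measure α} [NormedRing R]
    {p : ℝ≥0∞} (hp : 1 ≤ p) {w f : α → R} {g : ι → α → R} {s : Finset ι}
    (hf : AEStronglyMeasurable (fun x => w x * f x) μ)
    (hg : ∀ i ∈ s, AEStronglyMeasurable (fun x => w x * g i x) μ) :
    eLpNorm (fun x => w x * (f x - ∑ i ∈ s, g i x)) p μ
      ≤ eLpNorm (fun x => w x * f x) p μ + ∑ i ∈ s, eLpNorm (fun x => w x * g i x) p μ := by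
  have hsplit : (fun x => w x * (f x - ∑ i ∈ s, g i x))
      = (fun x => w x * f x) - ∑ i ∈ s, fun x => w x * g i x := by
    funext x
    simp [mul_sub, Finset.mul_sum]
  rw [hsplit]
  grw [eLpNorm_sub_le hf (s.aestronglyMeasurable_sum hg) hp, eLpNorm_sum_le hg hp]

lemma exists_sum_eLpNorm_one_add_sq_rpow_mul_PiFT_le {m : ℝ} {d : ℕ} (hd : (d : ℝ) < m - 1 / 2)
    {χ₀ : ℝ → ℝ} (hχsm : ContDiff ℝ (⊤ : ℕ∞) χ₀) (hχc : HasCompactSupport χ₀) :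
    ∃ C : ℝ≥0, ∀ h : ℝ, 0 < h → h ≤ 1 → ∀ φ : ℝ → ℂ, ContDiff ℝ (⊤ : ℕ∞) φ →
      HasCompactSupport φ → ∑ k ∈ Finset.range (d + 1),
        eLpNorm (fun ξ => (((1 + ξ ^ 2) ^ (-(m / 2)) : ℝ) : ℂ) * PiFT χ₀ φ k h ξ) 2 volume
          ≤ C * ENNReal.ofReal (h ^ (-(d : ℝ) - 1 / 2)) * sobolevNorm h m φ := by
  have hB := fun k (hk : k ∈ Finset.range (d + 1)) =>
    exists_eLpNorm_one_add_sq_rpow_mul_PiFT_le (m := m)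
      (lt_of_le_of_lt (by exact_mod_cast Finset.mem_range_succ_iff.1 hk) hd) hχsm hχc
  choose! B hB using hB
  refine ⟨∑ k ∈ Finset.range (d + 1), B k, fun h hh hh1 φ hφsm hφc => ?_⟩
  push_cast
  rw [Finset.sum_mul, Finset.sum_mul]
  refine Finset.sum_le_sum fun k hk => (hB k hk h hh hh1 φ hφsm hφc).trans ?_
  have hkd : (k : ℝ) ≤ d := by exact_mod_cast Finset.mem_range_succ_iff.1 hk
  gcongr _ * ENNReal.ofReal ?_ * _
  exact Real.rpow_le_rpow_of_exponent_ge hh hh1 (by linarith)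

theorem taylor_projection_remainder_bound_general (m : ℝ) (d : ℕ)
    (hd : (d : ℝ) < m - 1 / 2)
    (χ₀ : ℝ → ℝ) (hχsm : ContDiff ℝ (⊤ : ℕ∞) χ₀) (hχc : HasCompactSupport χ₀) :
    ∃ C : ℝ, 0 < C ∧ ∀ h : ℝ, 0 < h → h ≤ 1 →
      ∀ φ : ℝ → ℂ, ContDiff ℝ (⊤ : ℕ∞) φ → HasCompactSupport φ →
        eLpNorm
          (fun ξ : ℝ => (((1 + ξ ^ 2) ^ (-(m / 2)) : ℝ) : ℂ) *
            (semiFourier h (fun x => (χ₀ x : ℂ) * φ x) ξ -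
              ∑ k ∈ Finset.range (d + 1), PiFT χ₀ φ k h ξ)) 2 volume ≤
        ENNReal.ofReal (C * h ^ (-(d : ℝ) - 1 / 2)) * sobolevNorm h m φ := by
  have hm : 0 ≤ m := by linarith [d.cast_nonneg (α := ℝ)]
  obtain ⟨A, hA⟩ := exists_sobolevNorm_mul_le hm (Complex.ofRealCLM.contDiff.comp hχsm)
    (hχc.comp_left Complex.ofReal_zero)
  obtain ⟨B, hB⟩ := exists_sum_eLpNorm_one_add_sq_rpow_mul_PiFT_le hd hχsm hχc
  refine ⟨((A + B + 1 : ℝ≥0) : ℝ), by positivity, fun h hh hh1 φ hφsm hφc => ?_⟩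
  set t := ENNReal.ofReal (h ^ (-(d : ℝ) - 1 / 2))
  have h1t : 1 ≤ t := ENNReal.one_le_ofReal.2
    (Real.one_le_rpow_of_pos_of_le_one_of_nonpos hh hh1 (by linarith))
  have hW := Complex.continuous_ofReal.comp (continuous_one_add_sq_rpow (-(m / 2)))
  have hχφ : Integrable fun x => (χ₀ x : ℂ) * φ x :=
    ((Complex.continuous_ofReal.comp hχsm.continuous).mul
      hφsm.continuous).integrable_of_hasCompactSupport hφc.mul_left
  calc _ ≤ sobolevNorm h m (fun x => (χ₀ x : ℂ) * φ x) + ∑ k ∈ Finset.range (d + 1),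
        eLpNorm (fun ξ => (((1 + ξ ^ 2) ^ (-(m / 2)) : ℝ) : ℂ) * PiFT χ₀ φ k h ξ) 2 volume :=
        eLpNorm_mul_sub_sum_le one_le_two
          (hW.mul (continuous_semiFourier h hχφ)).aestronglyMeasurable
          fun k _ => (hW.mul (continuous_PiFT χ₀ φ k h)).aestronglyMeasurable
    _ ≤ A * t * sobolevNorm h m φ + B * t * sobolevNorm h m φ := by
        gcongr
        · exact (hA h hh hh1 φ hφsm hφc).trans (by gcongr; exact le_mul_of_one_le_right' h1t)
        · exact hB h hh hh1 φ hφsm hφc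
    _ ≤ _ := by
        rw [ENNReal.ofReal_mul (by positivity), ENNReal.ofReal_coe_nnreal, ← add_mul, ← add_mul]
        gcongr
        push_cast
        exact le_self_add

/-- **Operator norm of the Taylor projection remainder** (Lemma 6.5).
For `d < m − 1/2`, the `H^{-m}_ħ` norm (computed on the Fourier side) of
`(χ₀φ) − ∑_{k=0}^d Π_k φ` is bounded by `C ħ^{−d−1/2} ‖φ‖_{H^{-m}_ħ}`
uniformly in `0 < ħ ≤ 1` and `φ ∈ C_c^∞(ℝ)`. -/
theorem taylor_projection_remainder_bound (m : ℝ) (hm : 0 ≤ m) (d : ℕ)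
    (hd : (d : ℝ) < m - 1 / 2)
    (χ₀ : ℝ → ℝ) (hχsm : ContDiff ℝ (⊤ : ℕ∞) χ₀) (hχc : HasCompactSupport χ₀) :
    ∃ C : ℝ, 0 < C ∧ ∀ h : ℝ, 0 < h → h ≤ 1 →
      ∀ φ : ℝ → ℂ, ContDiff ℝ (⊤ : ℕ∞) φ → HasCompactSupport φ →
        eLpNorm
          (fun ξ : ℝ => (((1 + ξ ^ 2) ^ (-(m / 2)) : ℝ) : ℂ) *
            (semiFourier h (fun x => (χ₀ x : ℂ) * φ x) ξ -
              ∑ k ∈ Finset.range (d + 1), PiFT χ₀ φ k h ξ)) 2 volume ≤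
        ENNReal.ofReal (C * h ^ (-(d : ℝ) - 1 / 2)) * sobolevNorm h m φ :=
  taylor_projection_remainder_bound_general m d hd χ₀ hχsm hχc
end

section
/- Key inequality for minimal captivity of the linear IFS (core of Lemma A.3): Let 0 < J_1 ≤ J_2 with e^{−J_1} + e^{−J_2} < 1, and set R := 1/(e^{J_2} − 1). Then for every ξ ∈ [−R, 0], it is not the case that both e^{J_1} ξ ∈ [−R, 0] and e^{J_2} ξ + 1 ∈ [−R, 0]. (Explicitly: if −e^{−J_2} < ξ ≤ 0 then e^{J_2}ξ + 1 > 0, and if −R ≤ ξ ≤ −e^{−J_2} then e^{J_1}ξ < −R.) -/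
/-- **Key inequality for minimal captivity of the two-branch linear IFS**
(core of Lemma A.3). Let `0 < J₁ ≤ J₂` with `e^{−J₁} + e^{−J₂} < 1`, and set
`R := 1/(e^{J₂} − 1)`. Then for every `ξ ∈ [−R, 0]` it is not the case that both
`e^{J₁} ξ ∈ [−R, 0]` and `e^{J₂} ξ + 1 ∈ [−R, 0]`. Explicitly: if
`−e^{−J₂} < ξ ≤ 0` then `e^{J₂} ξ + 1 > 0`, and if `−R ≤ ξ ≤ −e^{−J₂}` then
`e^{J₁} ξ < −R`. -/
theorem linear_IFS_minimal_captivity_key (J₁ J₂ : ℝ) (hJ₁ : 0 < J₁) (hJ₁₂ : J₁ ≤ J₂)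
    (hsum : Real.exp (-J₁) + Real.exp (-J₂) < 1) :
    (∀ ξ ∈ Set.Icc (-(1 / (Real.exp J₂ - 1))) (0 : ℝ),
      ¬(Real.exp J₁ * ξ ∈ Set.Icc (-(1 / (Real.exp J₂ - 1))) (0 : ℝ) ∧
        Real.exp J₂ * ξ + 1 ∈ Set.Icc (-(1 / (Real.exp J₂ - 1))) (0 : ℝ))) ∧
    (∀ ξ : ℝ, -Real.exp (-J₂) < ξ → ξ ≤ 0 → 0 < Real.exp J₂ * ξ + 1) ∧
    (∀ ξ : ℝ, -(1 / (Real.exp J₂ - 1)) ≤ ξ → ξ ≤ -Real.exp (-J₂) →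
      Real.exp J₁ * ξ < -(1 / (Real.exp J₂ - 1))) := by
  have hJ₂ : 0 < J₂ := lt_of_lt_of_le hJ₁ hJ₁₂
  have hE1pos : 0 < Real.exp J₁ := Real.exp_pos _
  have hE2pos : 0 < Real.exp J₂ := Real.exp_pos _
  have hE2 : 1 < Real.exp J₂ := by
    calc (1:ℝ) = Real.exp 0 := by simp
    _ < Real.exp J₂ := Real.exp_lt_exp.2 hJ₂
  have hden : 0 < Real.exp J₂ - 1 := by linarith
  have hinv1 : Real.exp (-J₁) = 1 / Real.exp J₁ := by
    rw [Real.exp_neg]; rw [one_div]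
  have hinv2 : Real.exp (-J₂) = 1 / Real.exp J₂ := by
    rw [Real.exp_neg]; rw [one_div]
  have hsum' : 1 / Real.exp J₁ + 1 / Real.exp J₂ < 1 := by
    rw [← hinv1, ← hinv2]; exact hsum
  have hkey : Real.exp J₁ + Real.exp J₂ < Real.exp J₁ * Real.exp J₂ := by
    have h := mul_lt_mul_of_pos_left hsum' (mul_pos hE1pos hE2pos)
    have e1 : Real.exp J₁ * Real.exp J₂ * (1 / Real.exp J₁ + 1 / Real.exp J₂)
        = Real.exp J₂ + Real.exp J₁ := by field_simp
    nlinarith [h, e1]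
  have part2 : ∀ ξ : ℝ, -Real.exp (-J₂) < ξ → ξ ≤ 0 → 0 < Real.exp J₂ * ξ + 1 := by
    intro ξ h1 _
    rw [hinv2] at h1
    have hm : -1 < Real.exp J₂ * ξ := by
      rw [show (-1:ℝ) = Real.exp J₂ * (-(1 / Real.exp J₂)) by field_simp]
      exact mul_lt_mul_of_pos_left h1 hE2pos
    linarith
  have part3 : ∀ ξ : ℝ, -(1 / (Real.exp J₂ - 1)) ≤ ξ → ξ ≤ -Real.exp (-J₂) →
      Real.exp J₁ * ξ < -(1 / (Real.exp J₂ - 1)) := by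
    intro ξ _ h2
    rw [hinv2] at h2
    have h3 : Real.exp J₁ * ξ ≤ Real.exp J₁ * (-(1 / Real.exp J₂)) :=
      mul_le_mul_of_nonneg_left h2 hE1pos.le
    have h4 : 1 / (Real.exp J₂ - 1) < Real.exp J₁ / Real.exp J₂ := by
      rw [div_lt_div_iff₀ hden hE2pos]; nlinarith
    have h5 : Real.exp J₁ * (-(1 / Real.exp J₂)) = -(Real.exp J₁ / Real.exp J₂) := by
      ring
    linarith
  refine ⟨?_, part2, part3⟩
  intro ξ hξ ⟨hA, hB⟩
  by_cases h : -Real.exp (-J₂) < ξ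
  · exact absurd hB.2 (not_le.2 (by linarith [part2 ξ h hξ.2]))
  · push_neg at h
    exact absurd hA.1 (not_le.2 (part3 ξ hξ.1 h))
end

section
/- Trapped-set localization for the lifted linear IFS (part of Lemma A.3): Let 0 < J_1 ≤ J_2, set τ_1 := 0, τ_2 := 1 and R := 1/(e^{J_2} − 1). Suppose (j_k)_{k∈ℤ} ∈ {1,2}^{ℤ} and (ξ_k)_{k∈ℤ} ⊂ ℝ satisfy ξ_{k+1} = e^{J_{j_k}} ξ_k + τ_{j_k} for all k ∈ ℤ, and sup_{k∈ℤ} |ξ_k| < ∞. Then ξ_k ∈ [−R, 0] for all k ∈ ℤ. -/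
/-! Both branches expand distances from the interval `[-R, 0]` by at least `e^{J₁} > 1`:
a positive point is multiplied by at least `e^{J₁}`, and a point below `-R` moves away
from `-R` (the repelling fixed point of the second branch) by at least that factor.
Hence an orbit leaving `[-R, 0]` at some time is unbounded in forward time. -/

open Real

section Expanding

variable {c : ℝ} {x : ℤ → ℝ}

theorem pow_mul_le_of_expanding (hc : 0 < c) (hx : ∀ m, 0 < x m → c * x m ≤ x (m + 1))
    {k : ℤ} (hk : 0 < x k) (n : ℕ) : c ^ n * x k ≤ x (k + n) := by
  induction n with
  | zero => simp
  | succ n ih =>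
    have hpos : 0 < x (k + n) := (by positivity : 0 < c ^ n * x k).trans_le ih
    calc c ^ (n + 1) * x k = c * (c ^ n * x k) := by ring
      _ ≤ c * x (k + n) := by gcongr
      _ ≤ x (k + n + 1) := hx _ hpos
      _ = x (k + ↑(n + 1)) := by push_cast; ring_nf

theorem not_bddAbove_range_of_expanding (hc : 1 < c) (hx : ∀ m, 0 < x m → c * x m ≤ x (m + 1))
    {k : ℤ} (hk : 0 < x k) : ¬BddAbove (Set.range x) := by
  rintro ⟨M, hM⟩
  obtain ⟨n, hn⟩ := pow_unbounded_of_one_lt (M / x k) hc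
  have hgrowth := pow_mul_le_of_expanding (by linarith) hx hk n
  have hbound := hM ⟨k + n, rfl⟩
  linarith [(div_lt_iff₀ hk).1 hn]

end Expanding

section LinearIFS

variable {J₁ J₂ : ℝ}

theorem exp_mul_le_linearIFS_step (hJ₁₂ : J₁ ≤ J₂) (i : Fin 2) {x : ℝ} (hx : 0 < x) :
    exp J₁ * x ≤ exp (![J₁, J₂] i) * x + ![(0 : ℝ), 1] i := by
  have hexp : exp J₁ * x ≤ exp J₂ * x := by gcongr
  fin_cases i <;>
    simp only [Fin.zero_eta, Fin.mk_one, Matrix.cons_val_zero, Matrix.cons_val_one] <;> linarith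

theorem linearIFS_step_add_le (hJ₁ : 0 ≤ J₁) (hJ₁₂ : J₁ ≤ J₂) (hJ₂ : 0 < J₂) (i : Fin 2)
    {x : ℝ} (hx : x + 1 / (exp J₂ - 1) < 0) :
    exp (![J₁, J₂] i) * x + ![(0 : ℝ), 1] i + 1 / (exp J₂ - 1)
      ≤ exp J₁ * (x + 1 / (exp J₂ - 1)) := by
  set R := 1 / (exp J₂ - 1)
  have hE₂ : 1 < exp J₂ := one_lt_exp_iff.2 hJ₂
  have hR : 0 < R := by positivity
  -- `-R` is the fixed point of the second branch `ξ ↦ e^{J₂} ξ + 1`.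
  have hfix : exp J₂ * R = R + 1 := by
    simp only [R]
    field_simp [(by linarith : exp J₂ - 1 ≠ 0)]
    ring
  have hexp : exp J₂ * (x + R) ≤ exp J₁ * (x + R) :=
    mul_le_mul_of_nonpos_right (exp_le_exp.2 hJ₁₂) hx.le
  have hR_le : R ≤ exp J₁ * R := le_mul_of_one_le_left hR.le (one_le_exp hJ₁)
  fin_cases i <;>
    simp only [Fin.zero_eta, Fin.mk_one, Matrix.cons_val_zero, Matrix.cons_val_one] <;> linarith

end LinearIFS

/-- **Trapped-set localization for the lifted linear IFS** (part of Lemma A.3).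
Let `0 < J₁ ≤ J₂`, `τ₁ := 0`, `τ₂ := 1`, `R := 1/(e^{J₂} − 1)`. If a bi-infinite
sequence `(ξ_k)` evolves by `ξ_{k+1} = e^{J_{j_k}} ξ_k + τ_{j_k}` along branches
`j_k ∈ {1,2}` and is bounded, then `ξ_k ∈ [−R, 0]` for all `k ∈ ℤ`. -/
theorem linear_IFS_trapped_set_localization (J₁ J₂ : ℝ) (hJ₁ : 0 < J₁) (hJ₁₂ : J₁ ≤ J₂)
    (j : ℤ → Fin 2) (ξ : ℤ → ℝ)
    (hrec : ∀ k : ℤ, ξ (k + 1) = Real.exp ((![J₁, J₂]) (j k)) * ξ k + (![(0 : ℝ), 1]) (j k))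
    (hbd : ∃ M : ℝ, ∀ k : ℤ, |ξ k| ≤ M) :
    ∀ k : ℤ, ξ k ∈ Set.Icc (-(1 / (Real.exp J₂ - 1))) (0 : ℝ) := by
  obtain ⟨M, hM⟩ := hbd
  set R := 1 / (exp J₂ - 1)
  have hE₁ : 1 < exp J₁ := one_lt_exp_iff.2 hJ₁
  intro k
  constructor
  · by_contra! hk
    refine not_bddAbove_range_of_expanding hE₁ (x := fun m => -(ξ m + R)) (fun m hm => ?_)
      (k := k) (by linarith) ⟨M - R, ?_⟩
    · have hstep := linearIFS_step_add_le hJ₁.le hJ₁₂ (hJ₁.trans_le hJ₁₂) (j m) (neg_pos.1 hm)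
      linarith [hrec m]
    · rintro _ ⟨m, rfl⟩
      linarith [neg_abs_le (ξ m), hM m]
  · by_contra! hk
    refine not_bddAbove_range_of_expanding hE₁ (fun m hm => ?_) hk ⟨M, ?_⟩
    · rw [hrec m]
      exact exp_mul_le_linearIFS_step hJ₁₂ (j m) hm
    · rintro _ ⟨m, rfl⟩
      exact (le_abs_self _).trans (hM m)
end

section
/- Strict improvement of the new bound at the Gibbs–semiclassical crossover (Proposition A.4, case 2): Let 0 < J_1 ≤ J_2, set ω := e^{J_1 − J_2} ∈ (0, 1], and suppose e^{J_1/2} = 1 + ω with ω < 1. Then: (i) log(e^{−J_1} + e^{−J_2}) = −J_1/2 (so that for V = 0 the Gibbs bound P(1) equals the semiclassical bound −J_1/2); and (ii) log( e^{−(3/2)J_1} + e^{−(3/2)J_2} ) < 2 · log( e^{−J_1} + e^{−J_2} ), i.e. P(3/2) < 2P(1) where P(β) := log(e^{−βJ_1} + e^{−βJ_2}). -/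
/-- **Strict improvement of the new bound at the Gibbs–semiclassical crossover**
(Proposition A.4, case 2). Let `0 < J₁ ≤ J₂`, `ω := e^{J₁−J₂} ∈ (0,1)` and suppose
`e^{J₁/2} = 1 + ω`. Then (i) `log(e^{−J₁} + e^{−J₂}) = −J₁/2`, and
(ii) `P(3/2) < 2 P(1)` where `P(β) := log(e^{−βJ₁} + e^{−βJ₂})`. -/
theorem crossover_strict_improvement (J₁ J₂ ω : ℝ) (hJ₁ : 0 < J₁) (hJ₁₂ : J₁ ≤ J₂)
    (hω : ω = Real.exp (J₁ - J₂)) (hω1 : ω < 1)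
    (hcross : Real.exp (J₁ / 2) = 1 + ω) :
    Real.log (Real.exp (-J₁) + Real.exp (-J₂)) = -J₁ / 2 ∧
    Real.log (Real.exp (-(3 / 2) * J₁) + Real.exp (-(3 / 2) * J₂)) <
      2 * Real.log (Real.exp (-J₁) + Real.exp (-J₂)) := by
  have hlt : J₁ < J₂ := by
    rcases lt_or_eq_of_le hJ₁₂ with h | h
    · exact h
    · exfalso; rw [hω, h, sub_self, Real.exp_zero] at hω1; linarith
  have hsum : Real.exp (-J₁) + Real.exp (-J₂) = Real.exp (-J₁ / 2) := by
    have : Real.exp (-J₂) = Real.exp (-J₁) * ω := by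
      rw [hω, ← Real.exp_add]; ring_nf
    rw [this]
    have : Real.exp (-J₁) + Real.exp (-J₁) * ω = Real.exp (-J₁) * (1 + ω) := by ring
    rw [this, ← hcross, ← Real.exp_add]; ring_nf
  have hi : Real.log (Real.exp (-J₁) + Real.exp (-J₂)) = -J₁ / 2 := by
    rw [hsum, Real.log_exp]
  refine ⟨hi, ?_⟩
  rw [hi]
  have hsum2 : Real.exp (-(3 / 2) * J₁) + Real.exp (-(3 / 2) * J₂)
      = Real.exp (-(3 / 2) * J₁) * (1 + Real.exp ((3 / 2) * (J₁ - J₂))) := by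
    rw [mul_add, mul_one, ← Real.exp_add]; ring_nf
  have hpos : 0 < 1 + Real.exp ((3 / 2) * (J₁ - J₂)) := by positivity
  rw [hsum2, Real.log_mul (by positivity) (ne_of_gt hpos), Real.log_exp]
  have h1 : Real.exp ((3 / 2) * (J₁ - J₂)) < ω := by
    rw [hω]; exact Real.exp_lt_exp.2 (by nlinarith)
  have h2 : Real.log (1 + Real.exp ((3 / 2) * (J₁ - J₂))) < Real.log (1 + ω) :=
    Real.log_lt_log hpos (by linarith)
  have h3 : Real.log (1 + ω) = J₁ / 2 := by rw [← hcross, Real.log_exp]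
  linarith [h2, h3]
end
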